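/- arXiv:math/0205047 — 4 statements merged into one kernel-verified Lean document; each statement's English description precedes it below -/
import Mathlib

section
/- Let G be a loopless finite graph with n vertices. Then for every real t < 0, the chromatic polynomial P(G,t) is non-zero and has sign (−1)^n. -/
open Polynomial

/-- A finite multigraph (loops and multiple edges allowed), given with a fixed
orientation of its edges: each edge `e` has a source `src e` and target `tgt e`. -/
structure Multigraph where
  V : Type
  E : Type
  [fintypeV : Fintype V]
  [fintypeE : Fintype E]
  [decEqV : DecidableEq V]
  [decEqE : DecidableEq E]
  src : E → V
  tgt : E → V

attribute [instance] Multigraph.fintypeV Multigraph.fintypeE Multigraph.decEqV Multigraph.decEqE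

namespace Multigraph

/-- The number of proper `t`-colourings of `G`. -/
noncomputable def properColorings (G : Multigraph) (t : ℕ) : ℕ :=
  Nat.card {f : G.V → Fin t // ∀ e : G.E, f (G.src e) ≠ f (G.tgt e)}

/-- `P` is the chromatic polynomial of `G`: its value at each positive integer `t`
is the number of proper `t`-colourings of `G`. -/
def IsChromaticPoly (G : Multigraph) (P : Polynomial ℝ) : Prop :=
  ∀ t : ℕ, 0 < t → P.eval (t : ℝ) = G.properColorings t

/-- `G` has no loops. -/
def Loopless (G : Multigraph) : Prop := ∀ e : G.E, G.src e ≠ G.tgt e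

/-- Deletion of the edge `e₀`. -/
def deleteEdge (G : Multigraph) (e₀ : G.E) : Multigraph where
  V := G.V
  E := {e : G.E // e ≠ e₀}
  src e := G.src e.1
  tgt e := G.tgt e.1

/-- Contraction of the edge `e₀`: its two endpoints are identified (the vertex
`src e₀` is merged into `tgt e₀`), and `e₀` is removed. -/
def contractEdge (G : Multigraph) (e₀ : G.E) : Multigraph where
  V := {v : G.V // v = G.src e₀ → v = G.tgt e₀}
  E := {e : G.E // e ≠ e₀}
  src e := if h : G.src e.1 = G.src e₀ then ⟨G.tgt e₀, fun _ => rfl⟩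
    else ⟨G.src e.1, fun hv => absurd hv h⟩
  tgt e := if h : G.tgt e.1 = G.src e₀ then ⟨G.tgt e₀, fun _ => rfl⟩
    else ⟨G.tgt e.1, fun hv => absurd hv h⟩

/-- Two vertices are connected by a walk using only edges in `A`. -/
def ReachOn (G : Multigraph) (A : Finset G.E) (a b : G.V) : Prop :=
  Relation.EqvGen (fun x y => ∃ e ∈ A, G.src e = x ∧ G.tgt e = y) a b

/-- The number of connected components of the spanning subgraph of `G`
with edge set `A`. -/
noncomputable def numComponentsOn (G : Multigraph) (A : Finset G.E) : ℕ :=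
  Nat.card (Quotient (Relation.EqvGen.setoid (fun x y => ∃ e ∈ A, G.src e = x ∧ G.tgt e = y)))

/-- The number of connected components of `G`. -/
noncomputable def numComponents (G : Multigraph) : ℕ := G.numComponentsOn Finset.univ

/-- `G` is connected. -/
def Conn (G : Multigraph) : Prop :=
  Nonempty G.V ∧ ∀ a b : G.V, G.ReachOn Finset.univ a b

/-- `e` is a bridge of `G`. -/
def IsBridge (G : Multigraph) (e : G.E) : Prop :=
  G.numComponents < (G.deleteEdge e).numComponents

/-- A nowhere-zero `ZMod t`-flow on `G` (with respect to the fixed orientation). -/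
def IsNZFlow (G : Multigraph) {t : ℕ} (f : G.E → ZMod t) : Prop :=
  (∀ e : G.E, f e ≠ 0) ∧
    ∀ v : G.V, (∑ e : G.E, if G.src e = v then f e else 0) =
      ∑ e : G.E, if G.tgt e = v then f e else 0

/-- The number of nowhere-zero `ZMod t`-flows of `G`. -/
noncomputable def numFlows (G : Multigraph) (t : ℕ) : ℕ :=
  Nat.card {f : G.E → ZMod t // G.IsNZFlow f}

/-- `F` is the flow polynomial of `G`: its value at each positive integer `t`
is the number of nowhere-zero `ZMod t`-flows of `G`. -/
def IsFlowPoly (G : Multigraph) (F : Polynomial ℝ) : Prop :=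
  ∀ t : ℕ, 0 < t → F.eval (t : ℝ) = G.numFlows t

end Multigraph

/-!
Deleting an edge `e` of `G` splits its proper colourings by whether the two ends of `e` get
different colours (proper colourings of `G`) or the same colour (proper colourings of `G / e`),
so `P(G) = P(G - e) - P(G / e)`. If `e` is not a loop, `G / e` has one vertex fewer, hence
`(-1)^|G| P(G,t) = (-1)^|G - e| P(G - e, t) + (-1)^|G / e| P(G / e, t)`, and induction on the
number of edges shows that `(-1)^|G| P(G,t)` is non-negative for `t < 0` (a graph with a loop has
`P = 0`), and positive when `G` is loopless, starting from the edgeless graph with `P = X^n`.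
-/

namespace Multigraph

variable (G : Multigraph)

theorem induction_on_edges {motive : Multigraph → Prop}
    (edgeless : ∀ G : Multigraph, IsEmpty G.E → motive G)
    (step : ∀ (G : Multigraph) (e : G.E),
      motive (G.deleteEdge e) → motive (G.contractEdge e) → motive G) :
    motive G := by
  induction hn : Fintype.card G.E using Nat.strong_induction_on generalizing G with
  | _ n ih =>
  cases isEmpty_or_nonempty G.E with
  | inl hE => exact edgeless G hE
  | inr hE =>
    obtain ⟨e⟩ := hE
    have hlt : Fintype.card {x : G.E // x ≠ e} < n :=
      hn ▸ Fintype.card_subtype_lt (x := e) (by simp)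
    exact step G e (ih _ hlt (G.deleteEdge e) rfl) (ih _ hlt (G.contractEdge e) rfl)

section Contraction

variable {G} (e₀ : G.E)

def contractVertex (v : G.V) : (G.contractEdge e₀).V :=
  if h : v = G.src e₀ then ⟨G.tgt e₀, fun _ => rfl⟩ else ⟨v, fun hv => absurd hv h⟩

theorem contractVertex_val (v : G.V) :
    (contractVertex e₀ v).1 = if v = G.src e₀ then G.tgt e₀ else v := by
  by_cases h : v = G.src e₀ <;> simp [contractVertex, h]

theorem contractVertex_src : contractVertex e₀ (G.src e₀) = contractVertex e₀ (G.tgt e₀) := by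
  apply Subtype.ext
  simp only [contractVertex_val, ↓reduceIte, ite_self]

theorem contractVertex_coe (w : (G.contractEdge e₀).V) : contractVertex e₀ w.1 = w := by
  apply Subtype.ext
  rw [contractVertex_val]
  split_ifs with h
  · exact (w.2 h).symm
  · rfl

theorem apply_contractVertex {α : Type*} {f : G.V → α} (hf : f (G.src e₀) = f (G.tgt e₀))
    (v : G.V) : f (contractVertex e₀ v).1 = f v := by
  rw [contractVertex_val]
  split_ifs with h
  · rw [h, hf]
  · rfl

def contractFunEquiv (α : Type*) :
    ((G.contractEdge e₀).V → α) ≃ {f : G.V → α // f (G.src e₀) = f (G.tgt e₀)} where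
  toFun g := ⟨g ∘ contractVertex e₀, by simp only [Function.comp, contractVertex_src]⟩
  invFun f v := f.1 v.1
  left_inv g := funext fun w => congrArg g (contractVertex_coe e₀ w)
  right_inv f := Subtype.ext (funext (apply_contractVertex e₀ f.2))

theorem card_contractEdge_V_add_one (h : G.src e₀ ≠ G.tgt e₀) :
    Fintype.card (G.contractEdge e₀).V + 1 = Fintype.card G.V := by
  have hV : Fintype.card (G.contractEdge e₀).V = Fintype.card {v : G.V | v ≠ G.src e₀} :=
    Fintype.card_congr (Equiv.subtypeEquivRight fun v =>
      ⟨fun hv hvs => h (hvs.symm.trans (hv hvs)), fun hv hvs => absurd hvs hv⟩)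
  have hpos : 0 < Fintype.card G.V := Fintype.card_pos_iff.mpr ⟨G.src e₀⟩
  rw [hV, Set.card_ne_eq]
  omega

theorem neg_one_pow_mul_eval_sub {e : G.E} (he : G.src e ≠ G.tgt e) (Pd Pc : ℝ[X]) (t : ℝ) :
    (-1 : ℝ) ^ Fintype.card G.V * (Pd - Pc).eval t =
      (-1 : ℝ) ^ Fintype.card (G.deleteEdge e).V * Pd.eval t +
        (-1 : ℝ) ^ Fintype.card (G.contractEdge e).V * Pc.eval t := by
  have hdV : Fintype.card (G.deleteEdge e).V = Fintype.card G.V := rfl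
  rw [hdV, ← card_contractEdge_V_add_one e he, eval_sub, pow_succ]
  ring

end Contraction

theorem properColorings_deleteEdge (e₀ : G.E) (t : ℕ) :
    (G.deleteEdge e₀).properColorings t =
      G.properColorings t + (G.contractEdge e₀).properColorings t := by
  set D : (G.V → Fin t) → Prop := fun f => ∀ e : {e // e ≠ e₀}, f (G.src e.1) ≠ f (G.tgt e.1)
  set same : (G.V → Fin t) → Prop := fun f => f (G.src e₀) = f (G.tgt e₀)
  have split : Nat.card {f // D f} =
      Nat.card {f // D f ∧ ¬ same f} + Nat.card {f // D f ∧ same f} := by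
    rw [Nat.card_congr (Equiv.sumCompl fun f : {f // D f} => ¬ same f.1).symm, Nat.card_sum,
      Nat.card_congr (Equiv.subtypeSubtypeEquivSubtypeInter D (¬ same ·)),
      Nat.card_congr (Equiv.subtypeSubtypeEquivSubtypeInter D (¬ ¬ same ·))]
    simp only [not_not]
  have proper : G.properColorings t = Nat.card {f // D f ∧ ¬ same f} :=
    Nat.card_congr <| Equiv.subtypeEquivRight fun f =>
      ⟨fun hf => ⟨fun e => hf e.1, hf e₀⟩, fun ⟨hD, hne⟩ e =>
        if he : e = e₀ then he ▸ hne else hD ⟨e, he⟩⟩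
  -- properness of a colouring of `G / e₀` is, definitionally, properness off `e₀` of its pullback
  have contracted : (G.contractEdge e₀).properColorings t = Nat.card {f // same f ∧ D f} :=
    Nat.card_congr <| ((contractFunEquiv e₀ (Fin t)).subtypeEquiv (q := fun f => D f.1)
      fun _ => Iff.rfl).trans (Equiv.subtypeSubtypeEquivSubtypeInter same D)
  rw [proper, contracted]
  change Nat.card {f // D f} = _
  rw [split]
  exact congrArg _ (Nat.card_congr (Equiv.subtypeEquivRight fun _ => and_comm))

namespace IsChromaticPoly

variable {G}

theorem unique {P Q : ℝ[X]} (hP : G.IsChromaticPoly P) (hQ : G.IsChromaticPoly Q) : P = Q := by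
  apply Polynomial.eq_of_infinite_eval_eq
  apply Set.infinite_of_injective_forall_mem (f := fun k : ℕ => ((k + 1 : ℕ) : ℝ))
  · intro a b hab
    simpa using hab
  · intro k
    simp only [Set.mem_ofPred_eq, hP (k + 1) k.succ_pos, hQ (k + 1) k.succ_pos]

theorem sub_of_deleteEdge {e : G.E} {Pd Pc : ℝ[X]} (hd : (G.deleteEdge e).IsChromaticPoly Pd)
    (hc : (G.contractEdge e).IsChromaticPoly Pc) : G.IsChromaticPoly (Pd - Pc) := by
  intro t ht
  rw [eval_sub, hd t ht, hc t ht, properColorings_deleteEdge G e t]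
  push_cast
  ring

end IsChromaticPoly

theorem isChromaticPoly_X_pow [IsEmpty G.E] : G.IsChromaticPoly (X ^ Fintype.card G.V) := by
  intro t _
  rw [properColorings, Nat.card_congr (Equiv.subtypeUnivEquiv fun f e => isEmptyElim e)]
  simp

theorem isChromaticPoly_zero {e : G.E} (he : G.src e = G.tgt e) : G.IsChromaticPoly 0 := by
  intro t _
  have : IsEmpty {f : G.V → Fin t // ∀ e, f (G.src e) ≠ f (G.tgt e)} :=
    ⟨fun f => f.2 e (congrArg f.1 he)⟩
  simp [properColorings]

theorem exists_isChromaticPoly : ∃ P, G.IsChromaticPoly P := by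
  induction G using induction_on_edges with
  | edgeless G _ => exact ⟨_, G.isChromaticPoly_X_pow⟩
  | step G e ihd ihc =>
    obtain ⟨Pd, hd⟩ := ihd
    obtain ⟨Pc, hc⟩ := ihc
    exact ⟨_, hd.sub_of_deleteEdge hc⟩

namespace IsChromaticPoly

variable {G} {P : ℝ[X]}

theorem exists_deleteEdge_contractEdge (hP : G.IsChromaticPoly P) (e : G.E) :
    ∃ Pd Pc, (G.deleteEdge e).IsChromaticPoly Pd ∧ (G.contractEdge e).IsChromaticPoly Pc ∧
      P = Pd - Pc := by
  obtain ⟨Pd, hd⟩ := (G.deleteEdge e).exists_isChromaticPoly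
  obtain ⟨Pc, hc⟩ := (G.contractEdge e).exists_isChromaticPoly
  exact ⟨Pd, Pc, hd, hc, hP.unique (hd.sub_of_deleteEdge hc)⟩

theorem neg_one_pow_mul_eval_of_isEmpty [IsEmpty G.E] (hP : G.IsChromaticPoly P) {t : ℝ}
    (ht : t < 0) : 0 < (-1 : ℝ) ^ Fintype.card G.V * P.eval t := by
  rw [hP.unique G.isChromaticPoly_X_pow, eval_pow, eval_X, ← mul_pow, neg_one_mul]
  exact pow_pos (neg_pos.mpr ht) _

theorem neg_one_pow_mul_eval_nonneg (hP : G.IsChromaticPoly P) {t : ℝ} (ht : t < 0) :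
    0 ≤ (-1 : ℝ) ^ Fintype.card G.V * P.eval t := by
  induction G using induction_on_edges generalizing P with
  | edgeless G _ => exact (hP.neg_one_pow_mul_eval_of_isEmpty ht).le
  | step G e ihd ihc =>
    by_cases he : G.src e = G.tgt e
    · simp [hP.unique (G.isChromaticPoly_zero he)]
    · obtain ⟨Pd, Pc, hd, hc, rfl⟩ := hP.exists_deleteEdge_contractEdge e
      rw [neg_one_pow_mul_eval_sub he]
      exact add_nonneg (ihd hd) (ihc hc)

theorem neg_one_pow_mul_eval_pos (hG : G.Loopless) (hP : G.IsChromaticPoly P) {t : ℝ}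
    (ht : t < 0) : 0 < (-1 : ℝ) ^ Fintype.card G.V * P.eval t := by
  induction G using induction_on_edges generalizing P with
  | edgeless G _ => exact hP.neg_one_pow_mul_eval_of_isEmpty ht
  | step G e ihd _ =>
    obtain ⟨Pd, Pc, hd, hc, rfl⟩ := hP.exists_deleteEdge_contractEdge e
    rw [neg_one_pow_mul_eval_sub (hG e)]
    exact add_pos_of_pos_of_nonneg (ihd (fun e' => hG e'.1) hd)
      (hc.neg_one_pow_mul_eval_nonneg ht)

end IsChromaticPoly

end Multigraph

/-- For a loopless graph with `n` vertices, `P(G,t)` is non-zero with sign `(-1)^n`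
on `(-∞, 0)`. -/
theorem chromatic_nonzero_neg (G : Multigraph) (hG : G.Loopless)
    (P : Polynomial ℝ) (hP : G.IsChromaticPoly P)
    (t : ℝ) (ht : t < 0) :
    0 < (-1 : ℝ) ^ (Fintype.card G.V) * P.eval t :=
  hP.neg_one_pow_mul_eval_pos hG ht
end

section
/- Let G be a 2-connected bipartite graph with an odd number of vertices. Then the chromatic polynomial P(G,t) has a real root strictly between 1 and 2. -/
/-!
Write `β(G) = (-1) ^ |V| * P'(G, 1)`. Deletion–contraction `P(G) = P(G - e) - P(G / e)` gives
`β(G) = β(G - e) + β(G / e)`. Induction on the number of edges then shows `β(G) ≥ 0` for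
connected `G` with an edge (a bridge makes `P(G - e)` vanish to second order at `1`, a pendant
edge gives `P(G) = (t - 1) P(G / e)`), and `β(G) > 0` for 2-connected `G`, because for every
edge `e` of a 2-connected graph on at least three vertices, `G / e` or `G - e` is again
2-connected. For odd `|V|` this says `P'(G, 1) < 0`; since `P(G, 1) = 0`, `P(G, t) < 0` just to
the right of `1`, while `P(G, 2) > 0` because `G` is bipartite. The intermediate value theorem
gives the root.
-/

open Polynomial

/-- `P` is the chromatic polynomial of the simple graph `G`: its value at each
positive integer `t` is the number of proper `t`-colourings of `G`. -/
def SimpleGraph.IsChromaticPoly {V : Type*} (G : SimpleGraph V) (P : Polynomial ℝ) : Prop :=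
  ∀ t : ℕ, 0 < t → P.eval (t : ℝ) = Nat.card (G.Coloring (Fin t))

/-- `G` is 2-connected: it has at least 3 vertices and deleting any set of fewer
than 2 vertices leaves a connected graph. -/
def SimpleGraph.TwoConnected {V : Type*} (G : SimpleGraph V) : Prop :=
  3 ≤ Nat.card V ∧ ∀ U : Set V, Nat.card U < 2 →
    ((⊤ : G.Subgraph).deleteVerts U).coe.Connected

namespace SimpleGraph

variable {V W : Type} {G : SimpleGraph V} {H : SimpleGraph W} {A : Set V} {u v w x y : V}

def ReachIn (G : SimpleGraph V) (A : Set V) (x y : V) : Prop :=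
  ∃ p : G.Walk x y, ∀ z ∈ p.support, z ∈ A

namespace ReachIn

lemma refl (hx : x ∈ A) : G.ReachIn A x x := ⟨.nil, by simpa⟩

lemma of_adj (h : G.Adj x y) (hx : x ∈ A) (hy : y ∈ A) : G.ReachIn A x y :=
  ⟨h.toWalk, by simp [hx, hy]⟩

lemma symm (h : G.ReachIn A x y) : G.ReachIn A y x := by
  obtain ⟨p, hp⟩ := h
  exact ⟨p.reverse, by simpa using hp⟩

lemma trans (h : G.ReachIn A x y) (h' : G.ReachIn A y w) : G.ReachIn A x w := by
  obtain ⟨p, hp⟩ := h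
  obtain ⟨q, hq⟩ := h'
  exact ⟨p.append q, by simp only [Walk.mem_support_append_iff]; grind⟩

lemma left_mem : G.ReachIn A x y → x ∈ A
  | ⟨p, hp⟩ => hp _ p.start_mem_support

lemma mono {B : Set V} (hAB : A ⊆ B) : G.ReachIn A x y → G.ReachIn B x y
  | ⟨p, hp⟩ => ⟨p, fun z hz => hAB (hp z hz)⟩

lemma reachable : G.ReachIn A x y → G.Reachable x y
  | ⟨p, _⟩ => ⟨p⟩

lemma of_reachable (h : G.Reachable x y) : G.ReachIn Set.univ x y :=
  ⟨h.some, fun _ _ => trivial⟩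

lemma map {B : Set W} (f : V → W)
    (hf : ∀ a b, G.Adj a b → f a ∈ B → f b ∈ B → H.ReachIn B (f a) (f b))
    (h : G.ReachIn (f ⁻¹' B) x y) : H.ReachIn B (f x) (f y) := by
  obtain ⟨p, hp⟩ := h
  induction p with
  | nil => exact refl (hp _ (by simp))
  | cons hadj p ih =>
    simp only [Walk.support_cons, List.mem_cons, forall_eq_or_imp] at hp
    exact (hf _ _ hadj hp.1 (hp.2 _ p.start_mem_support)).trans (ih hp.2)

lemma diff_singleton (h : G.ReachIn A x y) (hw : ¬ G.ReachIn A x w) :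
    G.ReachIn (A \ {w}) x y := by
  classical
  obtain ⟨p, hp⟩ := h
  refine ⟨p, fun z hz => ⟨hp z hz, ?_⟩⟩
  rintro rfl
  exact hw ⟨p.takeUntil z hz, fun a ha => hp a (p.support_takeUntil_subset_support hz ha)⟩

lemma exists_adj_of_ne (h : G.ReachIn A x y) (hxy : x ≠ y) :
    ∃ z, G.Adj z y ∧ G.ReachIn (A \ {y}) x z := by
  obtain ⟨p, hp⟩ := h
  induction p with
  | nil => exact absurd rfl hxy
  | @cons a c y hac p ih =>
    simp only [Walk.support_cons, List.mem_cons, forall_eq_or_imp] at hp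
    by_cases hcy : c = y
    · subst hcy
      exact ⟨a, hac, refl ⟨hp.1, hxy⟩⟩
    · obtain ⟨z, hzy, hcz⟩ := ih hcy hp.2
      exact ⟨z, hzy, (of_adj (A := A \ {y}) hac ⟨hp.1, hxy⟩ hcz.left_mem).trans hcz⟩

lemma deleteEdges (h : G.ReachIn A x y) (hc : (G.deleteEdges {s(u, v)}).ReachIn A u v) :
    (G.deleteEdges {s(u, v)}).ReachIn A x y := by
  refine h.map id fun a b hab ha hb => ?_
  by_cases he : s(a, b) = s(u, v)
  · rcases Sym2.eq_iff.1 he with ⟨rfl, rfl⟩ | ⟨rfl, rfl⟩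
    exacts [hc, hc.symm]
  · exact .of_adj (deleteEdges_adj.2 ⟨hab, he⟩) ha hb

lemma deleteEdges_of_notMem {e : Sym2 V} (he : ∃ z ∈ e, z ∉ A) (h : G.ReachIn A x y) :
    (G.deleteEdges {e}).ReachIn A x y := by
  refine h.map id fun a b hab ha hb => .of_adj (deleteEdges_adj.2 ⟨hab, ?_⟩) ha hb
  rintro (rfl : s(a, b) = e)
  obtain ⟨z, hz, hzA⟩ := he
  rcases Sym2.mem_iff.1 hz with rfl | rfl
  exacts [hzA ha, hzA hb]

end ReachIn

lemma Reachable.mem_of_adj_closed {S : Set V} (hS : ∀ a b, G.Adj a b → a ∈ S → b ∈ S)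
    (h : G.Reachable x y) (hx : x ∈ S) : y ∈ S := by
  obtain ⟨p⟩ := h
  induction p with
  | nil => exact hx
  | cons hab p ih => exact ih (hS _ _ hab hx)

lemma Connected.card_eq_two (hG : G.Connected) (huv : G.Adj u v) (hu : ∀ w, G.Adj u w → w = v)
    (hv : ∀ w, G.Adj v w → w = u) : Nat.card V = 2 := by
  have hS : ∀ a b, G.Adj a b → a ∈ ({u, v} : Set V) → b ∈ ({u, v} : Set V) := by
    rintro a b hab (rfl | rfl)
    exacts [Or.inr (hu b hab), Or.inl (hv b hab)]
  exact Nat.card_eq_two_iff.2 ⟨u, v, huv.ne,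
    Set.eq_univ_of_forall fun x => (hG.preconnected u x).mem_of_adj_closed hS (by simp)⟩

lemma Connected.exists_adj_of_two_le_card [Finite V] (hG : G.Connected) (h2 : 2 ≤ Nat.card V) :
    ∃ u v, G.Adj u v := by
  have := Finite.one_lt_card_iff_nontrivial.1 h2
  obtain ⟨u⟩ := hG.nonempty
  exact ⟨u, hG.preconnected.exists_adj_of_nontrivial u⟩

lemma Connected.deleteEdges_of_reachable (hG : G.Connected)
    (h : (G.deleteEdges {s(u, v)}).Reachable u v) : (G.deleteEdges {s(u, v)}).Connected :=
  (connected_iff _).2 ⟨fun x y =>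
    ((ReachIn.of_reachable (hG.preconnected x y)).deleteEdges (.of_reachable h)).reachable,
    hG.nonempty⟩

section Contraction

variable (huv : u ≠ v)

open Classical in
noncomputable def identify (x : V) : ({v}ᶜ : Set V) :=
  if hx : x = v then ⟨u, huv⟩ else ⟨x, hx⟩

def contractEdge (G : SimpleGraph V) : SimpleGraph ({v}ᶜ : Set V) :=
  fromRel (Relation.Map G.Adj (identify huv) (identify huv))

variable {huv}

lemma identify_of_ne (hx : x ≠ v) : identify huv x = ⟨x, hx⟩ := by
  simp [identify, hx]

@[simp]
lemma identify_self : identify huv v = ⟨u, huv⟩ := by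
  simp [identify]

@[simp]
lemma identify_left : identify huv u = ⟨u, huv⟩ := identify_of_ne huv

@[simp]
lemma identify_coe (a : ({v}ᶜ : Set V)) : identify huv a = a := identify_of_ne a.2

lemma identify_eq_identify_iff (hxy : x ≠ y) :
    identify huv x = identify huv y ↔ s(x, y) = s(u, v) := by
  by_cases hx : x = v <;> by_cases hy : y = v
  · exact absurd (hx.trans hy.symm) hxy
  all_goals (try subst x); (try subst y)
  all_goals simp_all [identify_of_ne, Subtype.ext_iff, eq_comm]

lemma contractEdge_adj {a b : ({v}ᶜ : Set V)} :
    (G.contractEdge huv).Adj a b ↔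
      a ≠ b ∧ ∃ x y, G.Adj x y ∧ identify huv x = a ∧ identify huv y = b := by
  simp only [contractEdge, fromRel_adj, Relation.Map]
  grind [G.adj_symm]

lemma adj_identify (hxy : G.Adj x y) (he : s(x, y) ≠ s(u, v)) :
    (G.contractEdge huv).Adj (identify huv x) (identify huv y) :=
  contractEdge_adj.2 ⟨mt (identify_eq_identify_iff hxy.ne).1 he, x, y, hxy, rfl, rfl⟩

lemma ReachIn.contractEdge {B : Set ({v}ᶜ : Set V)} (h : G.ReachIn (identify huv ⁻¹' B) x y) :
    (G.contractEdge huv).ReachIn B (identify huv x) (identify huv y) := by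
  refine h.map _ fun a b hab ha hb => ?_
  by_cases he : s(a, b) = s(u, v)
  · rw [(identify_eq_identify_iff hab.ne).2 he]
    exact .refl hb
  · exact .of_adj (adj_identify hab he) ha hb

lemma Connected.contractEdge (hG : G.Connected) : (G.contractEdge huv).Connected := by
  refine (connected_iff _).2 ⟨fun a b => ?_, ⟨⟨u, huv⟩⟩⟩
  have := ReachIn.contractEdge (huv := huv) (B := Set.univ) (.of_reachable (hG.preconnected a b))
  simpa using this.reachable

end Contraction

section DeletionContraction

variable {α β : Type}

instance [Finite V] [Finite α] : Finite (G.Coloring α) :=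
  Finite.of_injective _ DFunLike.coe_injective

lemma apply_identify {huv : u ≠ v} {f : V → β} (h : f u = f v) (x : V) :
    f (identify huv x) = f x := by
  by_cases hx : x = v
  · subst hx
    simpa using h
  · rw [identify_of_ne hx]

def coloringEquivNe (huv : G.Adj u v) :
    G.Coloring α ≃ {f : (G.deleteEdges {s(u, v)}).Coloring α // f u ≠ f v} where
  toFun c := ⟨c.comp (Hom.ofLE (deleteEdges_le _)), c.valid huv⟩
  invFun f := Coloring.mk f.1 fun {a b} hab => by
    by_cases he : s(a, b) = s(u, v)
    · rcases Sym2.eq_iff.1 he with ⟨rfl, rfl⟩ | ⟨rfl, rfl⟩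
      exacts [f.2, f.2.symm]
    · exact f.1.valid (deleteEdges_adj.2 ⟨hab, he⟩)
  left_inv _ := rfl
  right_inv _ := rfl

noncomputable def coloringEquivEq (huv : u ≠ v) :
    (G.contractEdge huv).Coloring α ≃
      {f : (G.deleteEdges {s(u, v)}).Coloring α // f u = f v} where
  toFun c := ⟨Coloring.mk (c ∘ identify huv) fun hab => by
    obtain ⟨hab, he⟩ := deleteEdges_adj.1 hab
    exact c.valid (adj_identify hab he), congrArg c (identify_left.trans identify_self.symm)⟩
  invFun f := Coloring.mk (fun a => f.1 a) fun {a b} hab => by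
    obtain ⟨hne, x, y, hxy, rfl, rfl⟩ := contractEdge_adj.1 hab
    rw [apply_identify f.2, apply_identify f.2]
    exact f.1.valid (deleteEdges_adj.2 ⟨hxy, mt (identify_eq_identify_iff hxy.ne).2 hne⟩)
  left_inv c := by ext a; exact congrArg c (identify_coe a)
  right_inv f := by ext x; exact apply_identify f.2 x

lemma card_coloring_deleteEdges [Finite V] [Finite α] (huv : G.Adj u v) :
    Nat.card ((G.deleteEdges {s(u, v)}).Coloring α) =
      Nat.card (G.Coloring α) + Nat.card ((G.contractEdge huv.ne).Coloring α) := by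
  classical
  rw [Nat.card_congr (coloringEquivNe huv), Nat.card_congr (coloringEquivEq huv.ne), add_comm,
    ← Nat.card_sum, Nat.card_congr (Equiv.sumCompl _)]

lemma ncard_edgeSet_deleteEdges_lt [Finite V] (huv : G.Adj u v) :
    (G.deleteEdges {s(u, v)}).edgeSet.ncard < G.edgeSet.ncard := by
  rw [edgeSet_deleteEdges]
  exact Set.ncard_sdiff_singleton_lt_of_mem huv (Set.toFinite _)

lemma ncard_edgeSet_contractEdge_lt [Finite V] (huv : G.Adj u v) :
    (G.contractEdge huv.ne).edgeSet.ncard < G.edgeSet.ncard := by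
  have hsub : (G.contractEdge huv.ne).edgeSet ⊆
      Sym2.map (identify huv.ne) '' (G.deleteEdges {s(u, v)}).edgeSet := by
    intro e he
    induction e using Sym2.ind with | h a b =>
    obtain ⟨hne, x, y, hxy, rfl, rfl⟩ := contractEdge_adj.1 he
    exact ⟨s(x, y), deleteEdges_adj.2 ⟨hxy, mt (identify_eq_identify_iff hxy.ne).2 hne⟩,
      rfl⟩
  calc _ ≤ _ := Set.ncard_le_ncard hsub (Set.toFinite _)
    _ ≤ _ := Set.ncard_image_le (Set.toFinite _)
    _ < _ := ncard_edgeSet_deleteEdges_lt huv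

end DeletionContraction

theorem induction_on_ncard_edgeSet {motive : ∀ {V : Type} [Finite V], SimpleGraph V → Prop}
    (ind : ∀ {V : Type} [Finite V] (G : SimpleGraph V),
      (∀ {W : Type} [Finite W] (H : SimpleGraph W),
        H.edgeSet.ncard < G.edgeSet.ncard → motive H) → motive G)
    {V : Type} [Finite V] (G : SimpleGraph V) : motive G := by
  obtain ⟨m, hm⟩ : ∃ m, G.edgeSet.ncard = m := ⟨_, rfl⟩
  induction m using Nat.strong_induction_on generalizing V with
  | _ m ih => exact ind G fun H hH => ih _ (hm ▸ hH) H rfl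

section ChromaticPoly

variable {P Q : ℝ[X]}

lemma IsChromaticPoly.unique (hP : G.IsChromaticPoly P) (hQ : G.IsChromaticPoly Q) : P = Q := by
  refine eq_of_infinite_eval_eq P Q <| Set.infinite_of_injective_forall_mem
    (f := fun n : ℕ => ((n + 1 : ℕ) : ℝ)) (fun a b h => by simpa using h) fun n => ?_
  simp only [Set.mem_ofPred_eq, hP _ n.succ_pos, hQ _ n.succ_pos]

lemma isChromaticPoly_bot [Finite V] : (⊥ : SimpleGraph V).IsChromaticPoly (X ^ Nat.card V) := by
  intro t _
  let e : (⊥ : SimpleGraph V).Coloring (Fin t) ≃ (V → Fin t) :=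
    { toFun := fun c => c
      invFun := fun f => Coloring.mk f fun h => h.elim
      left_inv := fun _ => rfl
      right_inv := fun _ => rfl }
  simp [Nat.card_congr e, Nat.card_fun]

lemma IsChromaticPoly.sub [Finite V] (huv : G.Adj u v)
    (hP : (G.deleteEdges {s(u, v)}).IsChromaticPoly P)
    (hQ : (G.contractEdge huv.ne).IsChromaticPoly Q) :
    G.IsChromaticPoly (P - Q) := by
  intro t ht
  rw [eval_sub, hP t ht, hQ t ht, card_coloring_deleteEdges huv]
  push_cast
  ring

lemma exists_isChromaticPoly [Finite V] (G : SimpleGraph V) : ∃ P, G.IsChromaticPoly P := by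
  refine induction_on_ncard_edgeSet (motive := fun G => ∃ P, G.IsChromaticPoly P)
    (fun G ih => ?_) G
  by_cases hG : G = ⊥
  · exact hG ▸ ⟨_, isChromaticPoly_bot⟩
  obtain ⟨u, v, huv⟩ := ne_bot_iff_exists_adj.1 hG
  obtain ⟨P, hP⟩ := ih _ (ncard_edgeSet_deleteEdges_lt huv)
  obtain ⟨Q, hQ⟩ := ih _ (ncard_edgeSet_contractEdge_lt huv)
  exact ⟨_, hP.sub huv hQ⟩

noncomputable def chromaticPoly [Finite V] (G : SimpleGraph V) : ℝ[X] :=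
  (exists_isChromaticPoly G).choose

variable [Finite V]

lemma isChromaticPoly_chromaticPoly (G : SimpleGraph V) : G.IsChromaticPoly G.chromaticPoly :=
  (exists_isChromaticPoly G).choose_spec

lemma IsChromaticPoly.chromaticPoly_eq (h : G.IsChromaticPoly P) : G.chromaticPoly = P :=
  (isChromaticPoly_chromaticPoly G).unique h

lemma chromaticPoly_eq_sub (huv : G.Adj u v) :
    G.chromaticPoly =
      (G.deleteEdges {s(u, v)}).chromaticPoly - (G.contractEdge huv.ne).chromaticPoly :=
  (IsChromaticPoly.sub huv (isChromaticPoly_chromaticPoly _)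
    (isChromaticPoly_chromaticPoly _)).chromaticPoly_eq

lemma chromaticPoly_bot : (⊥ : SimpleGraph V).chromaticPoly = X ^ Nat.card V :=
  isChromaticPoly_bot.chromaticPoly_eq

lemma eval_one_chromaticPoly (huv : G.Adj u v) : G.chromaticPoly.eval 1 = 0 := by
  have : IsEmpty (G.Coloring (Fin 1)) := ⟨fun c => c.valid huv (Subsingleton.elim _ _)⟩
  simpa using isChromaticPoly_chromaticPoly G 1 one_pos

lemma chromaticPoly_eq_mul (A : Set V) (hA : ∀ a b, G.Adj a b → a ∈ A → b ∈ A) :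
    G.chromaticPoly = (G.induce A).chromaticPoly * (G.induce Aᶜ).chromaticPoly := by
  classical
  refine IsChromaticPoly.chromaticPoly_eq fun t ht => ?_
  let e : G.Coloring (Fin t) ≃
      (G.induce A).Coloring (Fin t) × (G.induce Aᶜ).Coloring (Fin t) :=
    { toFun := fun c => (c.comp (Embedding.induce A).toHom, c.comp (Embedding.induce Aᶜ).toHom)
      invFun := fun c =>
        Coloring.mk (fun x => if h : x ∈ A then c.1 ⟨x, h⟩ else c.2 ⟨x, h⟩)
          fun {a b} hab => by
            by_cases ha : a ∈ A
            · simpa [ha, hA a b hab ha] using c.1.valid (induce_adj.2 hab)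
            · have hb : b ∉ A := fun hb => ha (hA b a hab.symm hb)
              simpa [ha, hb] using c.2.valid (induce_adj.2 hab)
      left_inv := fun c => by ext x; simp [Coloring.mk]
      right_inv := fun c => Prod.ext (by ext a; simp [Coloring.mk, a.2])
        (by ext a; simp [Coloring.mk, show (a : V) ∉ A from a.2]) }
  rw [eval_mul, isChromaticPoly_chromaticPoly _ t ht, isChromaticPoly_chromaticPoly _ t ht,
    Nat.card_congr e, Nat.card_prod, Nat.cast_mul]

end ChromaticPoly

lemma card_compl_singleton_add_one [Finite V] (v : V) :
    Nat.card ({v}ᶜ : Set V) + 1 = Nat.card V := by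
  rw [Nat.card_coe_set_eq, ← Set.ncard_add_ncard_compl {v}, Set.ncard_singleton, add_comm]

lemma chromaticPoly_eq_X_of_card_eq_one [Finite V] (h : Nat.card V = 1) : G.chromaticPoly = X := by
  have : Subsingleton V := (Nat.card_eq_one_iff_unique.1 h).1
  have : Subsingleton (SimpleGraph V) := SimpleGraph.subsingleton_iff.2 this
  rw [Subsingleton.elim G ⊥, chromaticPoly_bot, h, pow_one]

section Beta

variable [Finite V]

/-- For a connected graph with at least one edge this is Crapo's beta invariant of its cycle
matroid, since then `P(G, t) = (-1) ^ (n - 1) * t * T_G(1 - t, 0)`. -/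
noncomputable def chromaticBeta (G : SimpleGraph V) : ℝ :=
  (-1) ^ Nat.card V * G.chromaticPoly.derivative.eval 1

lemma chromaticBeta_eq_add (huv : G.Adj u v) :
    G.chromaticBeta =
      (G.deleteEdges {s(u, v)}).chromaticBeta + (G.contractEdge huv.ne).chromaticBeta := by
  simp only [chromaticBeta, chromaticPoly_eq_sub huv, derivative_sub, eval_sub,
    ← card_compl_singleton_add_one v, pow_succ]
  ring

lemma chromaticBeta_eq_zero_of_closed (A : Set V) (hA : ∀ a b, G.Adj a b → a ∈ A → b ∈ A)
    {a b : A} (hab : G.Adj a b) {c d : ↥Aᶜ} (hcd : G.Adj c d) : G.chromaticBeta = 0 := by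
  rw [chromaticBeta, chromaticPoly_eq_mul A hA, derivative_mul, eval_add, eval_mul, eval_mul,
    eval_one_chromaticPoly (G := G.induce A) hab, eval_one_chromaticPoly (G := G.induce Aᶜ) hcd]
  ring

/-- A pendant edge `uv` contributes the factor `t - 1`: `P(G) = (t - 1) P(G / uv)`. -/
lemma chromaticBeta_of_pendant (huv : G.Adj u v) (hv : ∀ w, G.Adj v w → w = u) :
    G.chromaticBeta = (-1) ^ Nat.card V * (G.contractEdge huv.ne).chromaticPoly.eval 1 := by
  set D := G.deleteEdges {s(u, v)}
  have hclosed : ∀ a b, D.Adj a b → a ∈ ({v}ᶜ : Set V) → b ∈ ({v}ᶜ : Set V) := by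
    rintro a b hab ha rfl
    obtain ⟨hab, he⟩ := deleteEdges_adj.1 hab
    obtain rfl := hv a hab.symm
    exact he rfl
  have hinduce : D.induce {v}ᶜ = G.contractEdge huv.ne := by
    ext a b
    rw [induce_adj, contractEdge_adj]
    constructor
    · rintro hab
      obtain ⟨hab, he⟩ := deleteEdges_adj.1 hab
      exact ⟨fun h => hab.ne (congrArg Subtype.val h), a, b, hab, identify_coe a,
        identify_coe b⟩
    · rintro ⟨hne, x, y, hxy, rfl, rfl⟩
      have hx : x ≠ v := by
        rintro rfl
        exact hne (by rw [hv y hxy, identify_self, identify_left])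
      have hy : y ≠ v := by
        rintro rfl
        exact hne (by rw [hv x hxy.symm, identify_self, identify_left])
      rw [identify_of_ne hx, identify_of_ne hy]
      exact deleteEdges_adj.2 ⟨hxy, by simp [hx, hy]⟩
  have hsingle : (D.induce ({v}ᶜᶜ : Set V)).chromaticPoly = X :=
    chromaticPoly_eq_X_of_card_eq_one (by simp)
  rw [chromaticBeta, chromaticPoly_eq_sub huv, chromaticPoly_eq_mul _ hclosed, hinduce, hsingle]
  simp

lemma chromaticBeta_eq_zero_of_pendant (huv : G.Adj u v) (hv : ∀ w, G.Adj v w → w = u)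
    (huw : G.Adj u w) (hwv : w ≠ v) : G.chromaticBeta = 0 := by
  rw [chromaticBeta_of_pendant huv hv,
    eval_one_chromaticPoly (adj_identify huw (by simp [hwv, huv.ne])), mul_zero]

lemma chromaticBeta_eq_one_of_card_eq_two (h2 : Nat.card V = 2) (huv : G.Adj u v) :
    G.chromaticBeta = 1 := by
  have hv : ∀ w, G.Adj v w → w = u := fun w hw => by
    obtain ⟨y, -, hy⟩ := (Nat.card_eq_two_iff' v).1 h2
    exact (hy w hw.ne').trans (hy u huv.ne).symm
  have h1 : Nat.card ({v}ᶜ : Set V) = 1 := by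
    have := card_compl_singleton_add_one v
    omega
  rw [chromaticBeta_of_pendant huv hv, chromaticPoly_eq_X_of_card_eq_one h1, h2]
  norm_num

theorem Connected.chromaticBeta_nonneg (hG : G.Connected) (huv : G.Adj u v) :
    0 ≤ G.chromaticBeta := by
  revert u v
  refine induction_on_ncard_edgeSet
    (motive := fun G => G.Connected → ∀ {u v}, G.Adj u v → 0 ≤ G.chromaticBeta)
    (fun G ih hG u v huv => ?_) G hG
  by_cases hv : ∀ w, G.Adj v w → w = u
  · by_cases hu : ∀ w, G.Adj u w → w = v
    · rw [chromaticBeta_eq_one_of_card_eq_two (hG.card_eq_two huv hu hv) huv]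
      exact zero_le_one
    push Not at hu
    obtain ⟨w, huw, hwv⟩ := hu
    exact (chromaticBeta_eq_zero_of_pendant huv hv huw hwv).ge
  by_cases hu : ∀ w, G.Adj u w → w = v
  · push Not at hv
    obtain ⟨w, hvw, hwu⟩ := hv
    exact (chromaticBeta_eq_zero_of_pendant huv.symm hu hvw hwu).ge
  push Not at hu hv
  obtain ⟨w, huw, hwv⟩ := hu
  obtain ⟨w', hvw', hw'u⟩ := hv
  set D := G.deleteEdges {s(u, v)}
  have huwD : D.Adj u w := deleteEdges_adj.2 ⟨huw, by simp [hwv, huv.ne]⟩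
  have hvw'D : D.Adj v w' := deleteEdges_adj.2 ⟨hvw', by simp [hw'u, huv.ne']⟩
  have hD : 0 ≤ D.chromaticBeta := by
    by_cases hr : D.Reachable u v
    · exact ih _ (ncard_edgeSet_deleteEdges_lt huv) (hG.deleteEdges_of_reachable hr) huwD
    -- `uv` is a bridge: both sides of `D` carry an edge, so `P(D)` has a double root at `1`
    exact (chromaticBeta_eq_zero_of_closed {x | D.Reachable u x}
      (fun a b hab ha => ha.trans hab.reachable) (a := ⟨u, .rfl⟩) (b := ⟨w, huwD.reachable⟩)
      huwD (c := ⟨v, hr⟩) (d := ⟨w', fun h => hr (h.trans hvw'D.symm.reachable)⟩) hvw'D).ge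
  rw [chromaticBeta_eq_add huv]
  exact add_nonneg hD (ih _ (ncard_edgeSet_contractEdge_lt huv) hG.contractEdge
    (adj_identify huw (by simp [hwv, huv.ne])))

end Beta

lemma exists_ne_ne_of_three_le_card [Finite V] (h3 : 3 ≤ Nat.card V) (x y : V) :
    ∃ z, z ≠ x ∧ z ≠ y :=
  ENat.exists_ne_ne_of_three_le (by simpa [ENat.card_eq_coe_natCard] using h3) x y

/-- Unlike `TwoConnected`, this admits `K₂`, which makes the class closed under the step
`Biconnected.contractEdge_or_deleteEdges`. -/
structure Biconnected (G : SimpleGraph V) : Prop where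
  two_le_card : 2 ≤ Nat.card V
  connected : G.Connected
  reachIn_compl : ∀ ⦃w x y⦄, x ≠ w → y ≠ w → G.ReachIn {w}ᶜ x y

namespace Biconnected

/-- `u` and `v` both have neighbours in the component of `x` in `G - u - v`, which misses `w`. -/
lemma reachIn_deleteEdges (hG : G.Biconnected) (huv : G.Adj u v) (hxu : x ≠ u) (hxv : x ≠ v)
    (hwu : w ≠ u) (hwv : w ≠ v) (hw : ¬ G.ReachIn ({v}ᶜ \ {u}) x w) :
    (G.deleteEdges {s(u, v)}).ReachIn {w}ᶜ u v := by
  obtain ⟨a, hau, hxa⟩ := (hG.reachIn_compl hxv huv.ne).exists_adj_of_ne hxu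
  obtain ⟨b, hbv, hxb⟩ := (hG.reachIn_compl hxu huv.ne').exists_adj_of_ne hxv
  have hab : G.ReachIn (({v}ᶜ \ {u}) \ {w}) a b :=
    (hxa.symm.trans (hxb.mono fun z hz => ⟨hz.2, hz.1⟩)).diff_singleton
      fun h => hw (hxa.trans h)
  obtain ⟨⟨hav, -⟩, haw⟩ := hab.left_mem
  obtain ⟨⟨-, hbu⟩, hbw⟩ := hab.symm.left_mem
  have hab' := (hab.deleteEdges_of_notMem ⟨u, Sym2.mem_mk_left u v, fun h => h.1.2 rfl⟩).mono
    fun z hz => hz.2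
  have hua : (G.deleteEdges {s(u, v)}).Adj u a :=
    deleteEdges_adj.2 ⟨hau.symm, by simpa [huv.ne] using hav⟩
  have hbv' : (G.deleteEdges {s(u, v)}).Adj b v :=
    deleteEdges_adj.2 ⟨hbv, by simpa [huv.ne'] using hbu⟩
  exact (ReachIn.of_adj hua hwu.symm haw).trans (hab'.trans (.of_adj hbv' hbw hwv.symm))

variable [Finite V]

lemma connected_deleteEdges (hG : G.Biconnected) (h3 : 3 ≤ Nat.card V) (huv : G.Adj u v) :
    (G.deleteEdges {s(u, v)}).Connected := by
  obtain ⟨z, hzu, hzv⟩ := exists_ne_ne_of_three_le_card h3 u v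
  refine hG.connected.deleteEdges_of_reachable ?_
  have huz := (hG.reachIn_compl huv.ne hzv).deleteEdges_of_notMem
    ⟨v, Sym2.mem_mk_right u v, by simp⟩
  have hzv := (hG.reachIn_compl hzu huv.ne').deleteEdges_of_notMem
    ⟨u, Sym2.mem_mk_left u v, by simp⟩
  exact huz.reachable.trans hzv.reachable

theorem contractEdge_or_deleteEdges (hG : G.Biconnected) (h3 : 3 ≤ Nat.card V) (huv : G.Adj u v) :
    (G.contractEdge huv.ne).Biconnected ∨ (G.deleteEdges {s(u, v)}).Biconnected := by
  have hcard := card_compl_singleton_add_one v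
  by_cases hc : ∀ ⦃w x y : ({v}ᶜ : Set V)⦄, x ≠ w → y ≠ w →
      (G.contractEdge huv.ne).ReachIn {w}ᶜ x y
  · exact .inl ⟨by omega, hG.connected.contractEdge, hc⟩
  push Not at hc
  obtain ⟨w, x, y, hxw, hyw, hxy⟩ := hc
  have hxw' : x.1 ≠ w.1 := fun h => hxw (Subtype.ext h)
  have hyw' : y.1 ≠ w.1 := fun h => hyw (Subtype.ext h)
  -- a cut vertex of `G / uv` other than the merged vertex would be one of `G`
  obtain rfl : w = ⟨u, huv.ne⟩ := by
    by_contra hw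
    have hsep : ({w.1}ᶜ : Set V) ⊆ identify huv.ne ⁻¹' {w}ᶜ := fun z hz => by
      by_cases hzv : z = v
      · rw [Set.mem_preimage, hzv, identify_self]
        exact Ne.symm hw
      · rw [Set.mem_preimage, identify_of_ne hzv]
        exact fun h => hz (congrArg Subtype.val h)
    exact hxy (by simpa using ((hG.reachIn_compl hxw' hyw').mono hsep).contractEdge)
  -- so `x` and `y` lie in different components of `G - u - v`
  have hxy' : ¬ G.ReachIn ({v}ᶜ \ {u}) x y := by
    have hsub : ({v}ᶜ \ {u} : Set V) ⊆ identify huv.ne ⁻¹' {⟨u, huv.ne⟩}ᶜ := by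
      intro z hz
      rw [Set.mem_preimage, identify_of_ne hz.1]
      exact fun h => hz.2 (congrArg Subtype.val h)
    exact fun h => hxy (by simpa using (h.mono hsub).contractEdge)
  refine .inr ⟨by omega, hG.connected_deleteEdges h3 huv, fun w a b haw hbw => ?_⟩
  have hwab := hG.reachIn_compl haw hbw
  by_cases hwu : w = u
  · exact hwab.deleteEdges_of_notMem ⟨u, Sym2.mem_mk_left u v, by simp [hwu]⟩
  by_cases hwv : w = v
  · exact hwab.deleteEdges_of_notMem ⟨v, Sym2.mem_mk_right u v, by simp [hwv]⟩
  refine hwab.deleteEdges ?_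
  by_cases hxw : G.ReachIn ({v}ᶜ \ {u}) x w
  · exact hG.reachIn_deleteEdges huv hyw' y.2 hwu hwv fun hyw => hxy' (hxw.trans hyw.symm)
  · exact hG.reachIn_deleteEdges huv hxw' x.2 hwu hwv hxw

theorem chromaticBeta_pos (hG : G.Biconnected) : 0 < G.chromaticBeta := by
  refine induction_on_ncard_edgeSet (motive := fun G => G.Biconnected → 0 < G.chromaticBeta)
    (fun G ih hG => ?_) G hG
  obtain ⟨u, v, huv⟩ := hG.connected.exists_adj_of_two_le_card hG.two_le_card
  rcases hG.two_le_card.eq_or_lt with h2 | h3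
  · rw [chromaticBeta_eq_one_of_card_eq_two h2.symm huv]
    exact one_pos
  have hcard := card_compl_singleton_add_one v
  obtain ⟨a, b, hab⟩ := (hG.connected.contractEdge (huv := huv.ne)).exists_adj_of_two_le_card
    (by omega)
  obtain ⟨c, d, hcd⟩ :=
    (hG.connected_deleteEdges h3 huv).exists_adj_of_two_le_card hG.two_le_card
  rw [chromaticBeta_eq_add huv]
  rcases hG.contractEdge_or_deleteEdges h3 huv with hc | hd
  · exact add_pos_of_nonneg_of_pos ((hG.connected_deleteEdges h3 huv).chromaticBeta_nonneg hcd)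
      (ih _ (ncard_edgeSet_contractEdge_lt huv) hc)
  · exact add_pos_of_pos_of_nonneg (ih _ (ncard_edgeSet_deleteEdges_lt huv) hd)
      (hG.connected.contractEdge.chromaticBeta_nonneg hab)

end Biconnected

lemma reachIn_compl_of_connected_deleteVerts {U : Set V}
    (h : ((⊤ : G.Subgraph).deleteVerts U).coe.Connected) (hx : x ∉ U) (hy : y ∉ U) :
    G.ReachIn Uᶜ x y := by
  obtain ⟨p⟩ := h.preconnected ⟨x, Set.mem_univ x, hx⟩ ⟨y, Set.mem_univ y, hy⟩
  refine ⟨p.map (Subgraph.hom _), fun z hz => ?_⟩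
  replace hz : z ∈ p.support.map (Subgraph.hom _) := by rwa [← Walk.support_map]
  obtain ⟨z, -, rfl⟩ := List.mem_map.1 hz
  exact z.2.2

lemma TwoConnected.biconnected [Finite V] (h : G.TwoConnected) : G.Biconnected where
  two_le_card := by have := h.1; omega
  connected := by
    have : Nonempty V := (Nat.card_pos_iff.1 (by have := h.1; omega)).1
    refine (connected_iff _).2 ⟨fun x y => ?_, this⟩
    exact (reachIn_compl_of_connected_deleteVerts (h.2 ∅ (by simp)) (by simp) (by simp)).reachable
  reachIn_compl w x y hx hy :=
    reachIn_compl_of_connected_deleteVerts (h.2 {w} (by simp)) hx hy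

end SimpleGraph

open Topology in
lemma exists_mem_Ioo_eq_zero_of_hasDerivAt_neg {f : ℝ → ℝ} {f' a b : ℝ} (hab : a < b)
    (hf : ContinuousOn f (Set.Icc a b)) (hderiv : HasDerivAt f f' a) (hf' : f' < 0)
    (ha : f a = 0) (hb : 0 < f b) : ∃ x ∈ Set.Ioo a b, f x = 0 := by
  have hslope : ∀ᶠ c in 𝓝[>] a, slope f a c < 0 :=
    ((hasDerivAt_iff_tendsto_slope.1 hderiv).mono_left
      (nhdsWithin_mono _ fun _ hc => ne_of_gt hc)).eventually (gt_mem_nhds hf')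
  obtain ⟨c, hfc, hc⟩ := (hslope.and (Ioo_mem_nhdsGT hab)).exists
  rw [slope_def_field, ha, sub_zero] at hfc
  have hfc : f c < 0 := neg_of_div_neg_left hfc (sub_pos.2 hc.1).le
  obtain ⟨x, hx, hfx⟩ :=
    intermediate_value_Ioo hc.2.le (hf.mono (Set.Icc_subset_Icc hc.1.le le_rfl)) ⟨hfc, hb⟩
  exact ⟨x, ⟨hc.1.trans hx.1, hx.2⟩, hfx⟩

/-- A 2-connected bipartite graph with an odd number of vertices has a real
chromatic root strictly between 1 and 2. -/
theorem chromatic_root_in_one_two {V : Type} [Fintype V]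
    (G : SimpleGraph V) (h2 : G.TwoConnected) (hbip : G.Colorable 2)
    (hodd : Odd (Fintype.card V))
    (P : Polynomial ℝ) (hP : G.IsChromaticPoly P) :
    ∃ x : ℝ, 1 < x ∧ x < 2 ∧ P.eval x = 0 := by
  have hG := h2.biconnected
  obtain ⟨u, v, huv⟩ := hG.connected.exists_adj_of_two_le_card hG.two_le_card
  rw [← hP.chromaticPoly_eq]
  have hderiv : G.chromaticPoly.derivative.eval 1 < 0 := by
    have hβ := hG.chromaticBeta_pos
    rw [SimpleGraph.chromaticBeta, Nat.card_eq_fintype_card, hodd.neg_one_pow] at hβ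
    linarith
  have heval2 : 0 < G.chromaticPoly.eval 2 := by
    have : Nonempty (G.Coloring (Fin 2)) := hbip
    exact (G.isChromaticPoly_chromaticPoly 2 two_pos).trans_gt (Nat.cast_pos.2 Nat.card_pos)
  obtain ⟨x, hx, hPx⟩ := exists_mem_Ioo_eq_zero_of_hasDerivAt_neg one_lt_two
    (Polynomial.continuousOn _) (Polynomial.hasDerivAt _ 1) hderiv
    (SimpleGraph.eval_one_chromaticPoly huv) heval2
  exact ⟨x, hx.1, hx.2, hPx⟩
end

section
/- For any finite graph G and positive integers t0 ≤ t, if G has a nowhere-zero Z_{t0}-flow then G has a nowhere-zero Z_t-flow; in particular if F(G,t0) ≠ 0 for some positive integer t0, then F(G,t) ≠ 0 for all integers t ≥ t0. -/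
open Polynomial

/-!
Tutte's argument. Lift a nowhere-zero `ZMod t₀`-flow to an integer function `g` with values in
`(0, t₀)`; all its excesses (outflow minus inflow) are multiples of `t₀`. If some excess is
nonzero, a cut argument yields a residual path (forward along edges with `g e > 0`, backward
along edges with `g e < 0`) from a vertex of positive excess to one of negative excess. Pushing
`t₀` units across an edge of it, `g e ↦ g e ∓ t₀`, keeps all values in `(-t₀, t₀) \ {0}`; done one
edge at a time, this never increases the total absolute excess and strictly lowers it at the
last edge. A minimiser is therefore an integer flow with `0 < |g e| < t₀ ≤ t`, which reduces to a
nowhere-zero `ZMod t`-flow.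
-/

namespace Multigraph

variable {G : Multigraph}

section Excess

variable {M : Type*} [AddCommGroup M]

def excess (G : Multigraph) (g : G.E → M) (v : G.V) : M :=
  (∑ e : G.E, if G.src e = v then g e else 0) - ∑ e : G.E, if G.tgt e = v then g e else 0

theorem isNZFlow_iff {t : ℕ} (f : G.E → ZMod t) :
    G.IsNZFlow f ↔ (∀ e, f e ≠ 0) ∧ ∀ v, G.excess f v = 0 := by
  simp only [IsNZFlow, excess, sub_eq_zero]

theorem excess_intCast {R : Type*} [Ring R] (g : G.E → ℤ) (v : G.V) :
    G.excess (fun e => (g e : R)) v = G.excess g v := by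
  simp only [excess]
  push_cast [apply_ite (Int.cast : ℤ → R)]
  rfl

theorem sum_excess (g : G.E → M) (s : Finset G.V) :
    ∑ v ∈ s, G.excess g v =
      ∑ e, ((if G.src e ∈ s then g e else 0) - if G.tgt e ∈ s then g e else 0) := by
  simp only [excess, Finset.sum_sub_distrib]
  rw [Finset.sum_comm, Finset.sum_comm (s := s)]
  simp only [Finset.sum_ite_eq]

theorem sum_univ_excess (g : G.E → M) : ∑ v, G.excess g v = 0 := by
  simp [sum_excess]

theorem exists_excess_pos [LinearOrder M] [IsOrderedAddMonoid M] {g : G.E → M}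
    (h : ∃ v, G.excess g v ≠ 0) : ∃ v, 0 < G.excess g v := by
  by_contra! hle
  obtain ⟨v, hv⟩ := h
  exact hv ((Finset.sum_eq_zero_iff_of_nonpos fun v _ => hle v).1 (sum_univ_excess g) v
    (Finset.mem_univ v))

theorem excess_update (g : G.E → M) (e : G.E) (x : M) (v : G.V) :
    G.excess (Function.update g e x) v =
      G.excess g v +
        ((if G.src e = v then x - g e else 0) - if G.tgt e = v then x - g e else 0) := by
  have sum_update (s : G.E → G.V) : (∑ e', if s e' = v then Function.update g e x e' else 0) =
      (∑ e', if s e' = v then g e' else 0) + if s e = v then x - g e else 0 := by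
    calc (∑ e', if s e' = v then Function.update g e x e' else 0)
        = ∑ e', ((if s e' = v then g e' else 0) +
            if e' = e then (if s e = v then x - g e else 0) else 0) := by
          refine Finset.sum_congr rfl fun e' _ => ?_
          by_cases he : e' = e
          · subst he; by_cases hs : s e' = v <;> simp [hs]
          · simp [he]
      _ = _ := by rw [Finset.sum_add_distrib, Finset.sum_ite_eq', if_pos (Finset.mem_univ e)]
  simp only [excess, sum_update]
  abel

end Excess

section Residual

variable {g g' : G.E → ℤ} {e : G.E} {a b c : G.V} {l : List G.E}

def ResidualStep (g : G.E → ℤ) (e : G.E) (a c : G.V) : Prop :=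
  (0 < g e ∧ G.src e = a ∧ G.tgt e = c) ∨ (g e < 0 ∧ G.src e = c ∧ G.tgt e = a)

inductive ResidualPath (g : G.E → ℤ) : G.V → G.V → List G.E → Prop
  | nil (a : G.V) : ResidualPath g a a []
  | cons {a c b : G.V} {e : G.E} {l : List G.E} :
      ResidualStep g e a c → ResidualPath g c b l → ResidualPath g a b (e :: l)

theorem ResidualStep.tgt_eq {x y : G.V} (h : ResidualStep g e a c) (h' : ResidualStep g e x y) :
    c = y := by
  rcases h with ⟨hg, -, hc⟩ | ⟨hg, hc, -⟩ <;> rcases h' with ⟨hg', -, hy⟩ | ⟨hg', hy, -⟩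
  exacts [hc.symm.trans hy, absurd hg (by omega), absurd hg (by omega), hc.symm.trans hy]

theorem ResidualPath.snoc (hp : ResidualPath g a b l) (h : ResidualStep g e b c) :
    ResidualPath g a c (l ++ [e]) := by
  induction hp with
  | nil a => exact .cons h (.nil c)
  | cons hstep _ ih => exact .cons hstep (ih h)

theorem ResidualPath.congr (hp : ResidualPath g a b l) (hg : ∀ e ∈ l, g' e = g e) :
    ResidualPath g' a b l := by
  induction hp with
  | nil a => exact .nil a
  | @cons _ _ _ e _ hstep _ ih =>
    refine .cons ?_ (ih fun e' he' => hg e' (List.mem_cons_of_mem _ he'))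
    rwa [ResidualStep, hg e List.mem_cons_self]

theorem ResidualPath.exists_shorter_of_mem {x : G.V} (hp : ResidualPath g x b l) (he : e ∈ l)
    (h : ResidualStep g e a c) : ∃ l', ResidualPath g c b l' ∧ l'.length < l.length := by
  induction hp with
  | nil => simp at he
  | @cons _ _ _ e' l₂ hstep hrest ih =>
    by_cases hee : e' = e
    · subst hee
      exact ⟨l₂, h.tgt_eq hstep ▸ hrest, by simp⟩
    · obtain ⟨l', hl', hlt⟩ := ih ((List.mem_cons.1 he).resolve_left (Ne.symm hee))
      exact ⟨l', hl', by simp; omega⟩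

theorem sum_excess_nonpos_of_closed (s : Finset G.V)
    (hs : ∀ e a c, ResidualStep g e a c → a ∈ s → c ∈ s) : ∑ v ∈ s, G.excess g v ≤ 0 := by
  rw [sum_excess]
  refine Finset.sum_nonpos fun e _ => ?_
  by_cases hsrc : G.src e ∈ s <;> by_cases htgt : G.tgt e ∈ s <;>
    simp only [hsrc, htgt, if_true, if_false]
  · simp
  · have : ¬ 0 < g e := fun hpos => htgt (hs e _ _ (.inl ⟨hpos, rfl, rfl⟩) hsrc)
    omega
  · have : ¬ g e < 0 := fun hneg => hsrc (hs e _ _ (.inr ⟨hneg, rfl, rfl⟩) htgt)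
    omega
  · simp

theorem exists_residualPath_excess_neg (hu : 0 < G.excess g a) :
    ∃ b l, ResidualPath g a b l ∧ G.excess g b < 0 := by
  classical
  by_contra! h
  let s := Finset.univ.filter fun v => ∃ l, ResidualPath g a v l
  have hclosed : ∀ e v w, ResidualStep g e v w → v ∈ s → w ∈ s := by
    simp only [s, Finset.mem_filter, Finset.mem_univ, true_and]
    rintro e v w hstep ⟨l, hl⟩
    exact ⟨_, hl.snoc hstep⟩
  have hpos : 0 < ∑ v ∈ s, G.excess g v := by
    refine Finset.sum_pos' (fun v hv => ?_) ⟨a, ?_, hu⟩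
    · obtain ⟨l, hl⟩ := (Finset.mem_filter.1 hv).2
      exact h v l hl
    · simpa [s] using ⟨[], .nil a⟩
  exact (sum_excess_nonpos_of_closed s hclosed).not_gt hpos

end Residual

section Descent

variable {k : ℕ} {g : G.E → ℤ} {e : G.E} {a b c : G.V} {l : List G.E}

def push (k : ℕ) (g : G.E → ℤ) (e : G.E) : G.E → ℤ :=
  Function.update g e (if 0 < g e then g e - k else g e + k)

def totalExcess (g : G.E → ℤ) : ℕ := ∑ v, (G.excess g v).natAbs

def IsNZFlowLift (k : ℕ) (g : G.E → ℤ) : Prop :=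
  G.IsNZFlow (fun e => (g e : ZMod k)) ∧ ∀ e, |g e| < k

theorem excess_push (h : ResidualStep g e a c) (v : G.V) :
    G.excess (push k g e) v =
      G.excess g v - (if a = v then (k : ℤ) else 0) + if c = v then (k : ℤ) else 0 := by
  rw [push, excess_update]
  rcases h with ⟨hg, rfl, rfl⟩ | ⟨hg, rfl, rfl⟩
  · rw [if_pos hg]; split_ifs <;> omega
  · rw [if_neg hg.not_gt]; split_ifs <;> omega

theorem totalExcess_push (h : ResidualStep g e a c) (hac : a ≠ c) :
    (G.totalExcess (push k g e) : ℤ) = G.totalExcess g +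
      (|G.excess g a - k| - |G.excess g a|) + (|G.excess g c + k| - |G.excess g c|) := by
  have hsum := Fintype.sum_eq_add a c hac
    (f := fun v => |G.excess (push k g e) v| - |G.excess g v|) fun v ⟨hva, hvc⟩ => by
      simp [excess_push h, Ne.symm hva, Ne.symm hvc]
  have ha : G.excess (push k g e) a = G.excess g a - k := by
    simp [excess_push h, Ne.symm hac]
  have hc : G.excess (push k g e) c = G.excess g c + k := by
    simp [excess_push h, hac]
  rw [Finset.sum_sub_distrib, ha, hc] at hsum
  simp only [totalExcess, Nat.cast_sum, Int.natCast_natAbs]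
  linarith

namespace IsNZFlowLift

theorem ne_zero (hg : G.IsNZFlowLift k g) (e : G.E) : g e ≠ 0 :=
  fun h => hg.1.1 e (by simp [h])

theorem natCast_pos (hg : G.IsNZFlowLift k g) (e : G.E) : (0 : ℤ) < k :=
  (abs_nonneg _).trans_lt (hg.2 e)

theorem dvd_excess (hg : G.IsNZFlowLift k g) (v : G.V) : (k : ℤ) ∣ G.excess g v := by
  rw [← ZMod.intCast_zmod_eq_zero_iff_dvd, ← excess_intCast]
  exact ((isNZFlow_iff _).1 hg.1).2 v

theorem le_excess (hg : G.IsNZFlowLift k g) (ha : 0 < G.excess g a) : (k : ℤ) ≤ G.excess g a :=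
  Int.le_of_dvd ha (hg.dvd_excess a)

theorem excess_le (hg : G.IsNZFlowLift k g) (hc : G.excess g c < 0) : G.excess g c ≤ -k := by
  have := Int.le_of_dvd (neg_pos.2 hc) (dvd_neg.2 (hg.dvd_excess c))
  omega

theorem push (hg : G.IsNZFlowLift k g) (h : ResidualStep g e a c) :
    G.IsNZFlowLift k (push k g e) := by
  have hcast : (fun e' => (Multigraph.push k g e e' : ZMod k)) = fun e' => (g e' : ZMod k) := by
    funext e'
    by_cases he : e' = e
    · subst he; simp only [Multigraph.push, Function.update_self]; split_ifs <;> simp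
    · simp only [Multigraph.push, Function.update_of_ne he]
  refine ⟨hcast ▸ hg.1, fun e' => ?_⟩
  by_cases he : e' = e
  · subst he
    have hlt := abs_lt.1 (hg.2 e')
    have hne := hg.ne_zero e'
    rw [Multigraph.push, Function.update_self, abs_lt]
    split_ifs <;> omega
  · rw [Multigraph.push, Function.update_of_ne he]
    exact hg.2 e'

theorem totalExcess_push_lt (hg : G.IsNZFlowLift k g) (h : ResidualStep g e a c) (hac : a ≠ c)
    (ha : 0 < G.excess g a) (hc : G.excess g c < 0) :
    G.totalExcess (Multigraph.push k g e) < G.totalExcess g := by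
  have hk := hg.natCast_pos e
  have hka := hg.le_excess ha
  have hkc := hg.excess_le hc
  have := totalExcess_push (k := k) h hac
  rw [abs_of_nonneg (by omega : 0 ≤ G.excess g a - k), abs_of_pos ha,
    abs_of_nonpos (by omega : G.excess g c + k ≤ 0), abs_of_neg hc] at this
  omega

theorem totalExcess_push_eq (hg : G.IsNZFlowLift k g) (h : ResidualStep g e a c) (hac : a ≠ c)
    (ha : 0 < G.excess g a) (hc : 0 ≤ G.excess g c) :
    G.totalExcess (Multigraph.push k g e) = G.totalExcess g := by
  have hka := hg.le_excess ha
  have := totalExcess_push (k := k) h hac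
  rw [abs_of_nonneg (by omega : 0 ≤ G.excess g a - k), abs_of_pos ha,
    abs_of_nonneg (by omega : 0 ≤ G.excess g c + k), abs_of_nonneg hc] at this
  omega

theorem exists_totalExcess_lt (hg : G.IsNZFlowLift k g) (hp : ResidualPath g a b l)
    (ha : 0 < G.excess g a) (hb : G.excess g b < 0) :
    ∃ g', G.IsNZFlowLift k g' ∧ G.totalExcess g' < G.totalExcess g := by
  induction hlen : l.length using Nat.strong_induction_on generalizing g a l with
  | _ n ih =>
  cases hp with
  | nil => exact absurd (ha.trans hb) (lt_irrefl _)
  | @cons _ c _ e l₂ hstep hrest =>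
    subst hlen
    by_cases hac : a = c
    · subst hac
      exact ih l₂.length (by simp) hg hrest ha hb rfl
    -- pushing across `e` would reverse its later occurrence, so cut that loop out first
    by_cases he : e ∈ l₂
    · obtain ⟨l', hl', hlt⟩ := hrest.exists_shorter_of_mem he hstep
      exact ih (e :: l').length (by simp [hlt]) hg (.cons hstep hl') ha hb rfl
    by_cases hc : G.excess g c < 0
    · exact ⟨_, hg.push hstep, hg.totalExcess_push_lt hstep hac ha hc⟩
    have hk := hg.natCast_pos e
    have hab : a ≠ b := by rintro rfl; omega
    have hcb : c ≠ b := by rintro rfl; omega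
    have hrest' : ResidualPath (Multigraph.push k g e) c b l₂ :=
      hrest.congr fun e' he' => Function.update_of_ne (by rintro rfl; exact he he') _ _
    obtain ⟨g', hg', hlt⟩ := ih l₂.length (by simp) (hg.push hstep) hrest'
      (by simp [excess_push hstep, hac]; omega) (by simp [excess_push hstep, hab, hcb, hb]) rfl
    exact ⟨g', hg', hlt.trans_eq (hg.totalExcess_push_eq hstep hac ha (not_lt.1 hc))⟩

theorem exists_excess_eq_zero (hg : G.IsNZFlowLift k g) :
    ∃ g', G.IsNZFlowLift k g' ∧ ∀ v, G.excess g' v = 0 := by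
  obtain ⟨g₀, hg₀, hmin⟩ :=
    (measure G.totalExcess).wf.has_min {g | G.IsNZFlowLift k g} ⟨g, hg⟩
  refine ⟨g₀, hg₀, ?_⟩
  by_contra! hne
  obtain ⟨a, ha⟩ := exists_excess_pos hne
  obtain ⟨b, l, hp, hb⟩ := exists_residualPath_excess_neg ha
  obtain ⟨g', hg', hlt⟩ := hg₀.exists_totalExcess_lt hp ha hb
  exact hmin g' hg' hlt

end IsNZFlowLift

end Descent

theorem exists_intFlow_of_isNZFlow {k : ℕ} [NeZero k] {f : G.E → ZMod k} (hf : G.IsNZFlow f) :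
    ∃ g : G.E → ℤ, (∀ e, g e ≠ 0 ∧ |g e| < k) ∧ ∀ v, G.excess g v = 0 := by
  have hlift : G.IsNZFlowLift k fun e => ((f e).val : ℤ) :=
    ⟨by simpa using hf, fun e => by rw [Nat.abs_cast]; exact_mod_cast ZMod.val_lt (f e)⟩
  obtain ⟨g, hg, hexc⟩ := hlift.exists_excess_eq_zero
  exact ⟨g, fun e => ⟨hg.ne_zero e, hg.2 e⟩, hexc⟩

theorem isNZFlow_intCast {t : ℕ} {g : G.E → ℤ} (hg : ∀ e, g e ≠ 0 ∧ |g e| < t)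
    (hexc : ∀ v, G.excess g v = 0) : G.IsNZFlow fun e => (g e : ZMod t) := by
  refine (isNZFlow_iff _).2 ⟨fun e he => (hg e).1 ?_, fun v => ?_⟩
  · exact Int.eq_zero_of_abs_lt_dvd ((ZMod.intCast_zmod_eq_zero_iff_dvd _ _).1 he) (hg e).2
  · rw [excess_intCast, hexc v, Int.cast_zero]

theorem exists_isNZFlow_of_le {t₀ t : ℕ} [NeZero t₀] (h : t₀ ≤ t) {f : G.E → ZMod t₀}
    (hf : G.IsNZFlow f) : ∃ g : G.E → ZMod t, G.IsNZFlow g := by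
  obtain ⟨g, hg, hexc⟩ := exists_intFlow_of_isNZFlow hf
  exact ⟨_, isNZFlow_intCast (fun e => ⟨(hg e).1, (hg e).2.trans_le (by exact_mod_cast h)⟩) hexc⟩

theorem numFlows_ne_zero_iff {t : ℕ} [NeZero t] :
    G.numFlows t ≠ 0 ↔ ∃ f : G.E → ZMod t, G.IsNZFlow f := by
  rw [numFlows, Nat.card_ne_zero, and_iff_left Subtype.finite, nonempty_subtype]

end Multigraph

/-- If `G` has a nowhere-zero `ZMod t₀`-flow and `t₀ ≤ t`, then `G` has a
nowhere-zero `ZMod t`-flow; in particular if `F(G,t₀) ≠ 0` for some positive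
integer `t₀` then `F(G,t) ≠ 0` for all integers `t ≥ t₀`. -/
theorem flow_monotone (G : Multigraph) (t₀ t : ℕ) (ht₀ : 0 < t₀) (h : t₀ ≤ t) :
    ((∃ f : G.E → ZMod t₀, G.IsNZFlow f) → ∃ g : G.E → ZMod t, G.IsNZFlow g) ∧
      (G.numFlows t₀ ≠ 0 → G.numFlows t ≠ 0) := by
  have : NeZero t₀ := ⟨ht₀.ne'⟩
  have : NeZero t := ⟨by omega⟩
  have hmono : (∃ f : G.E → ZMod t₀, G.IsNZFlow f) → ∃ g : G.E → ZMod t, G.IsNZFlow g :=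
    fun ⟨f, hf⟩ => G.exists_isNZFlow_of_le h hf
  rw [G.numFlows_ne_zero_iff, G.numFlows_ne_zero_iff]
  exact ⟨hmono, hmono⟩
end

section
/- Let G be a connected plane graph and G* its planar dual. Then t·F(G,t) = P(G*,t), i.e., the number of proper t-colourings of G* equals t times the number of nowhere-zero Z_t-flows of G, for every positive integer t. -/
open Polynomial

namespace Multigraph

/-- `A` is an even (cycle-space) edge set: every vertex is incident with an even
number of edge-ends of `A`. -/
def IsEvenEdgeSet (G : Multigraph) (A : Finset G.E) : Prop :=
  ∀ v : G.V, Even ((A.filter fun e => G.src e = v).card +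
    (A.filter fun e => G.tgt e = v).card)

/-- The edge cut determined by a vertex set `S`: the edges with exactly one
endpoint in `S`. -/
def cutEdges (G : Multigraph) (S : Finset G.V) : Finset G.E :=
  Finset.univ.filter fun e =>
    (G.src e ∈ S ∧ G.tgt e ∉ S) ∨ (G.src e ∉ S ∧ G.tgt e ∈ S)

/-- `H` together with the edge bijection `φ` is a (planar/abstract) dual of `G`:
an edge set of `G` lies in the cycle space of `G` exactly when its image lies in
the cocycle (cut) space of `H`. For a connected plane graph `G`, its planar dual
`G*` satisfies this with the natural edge bijection. -/
def IsDual (G H : Multigraph) (φ : G.E ≃ H.E) : Prop :=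
  ∀ A : Finset G.E,
    G.IsEvenEdgeSet A ↔ ∃ S : Finset H.V, A.map φ.toEmbedding = H.cutEdges S

end Multigraph

/-!
Both sides expand over edge subsets. Inclusion–exclusion over the edges on which a colouring is
monochromatic gives `P(H, t) = ∑_B (-1)^|B| t^{c_H(B)}`, where `c_H(B)` counts the components of
the spanning subgraph with edge set `B`. The `ℤ/t`-flows supported on `A` are the kernel of the
boundary map, whose image consists of the functions summing to zero on each component of `A`; so
there are `t^{|A| + c_G(A) - |V|}` of them, and inclusion–exclusion over the edges where a flow
vanishes gives `F(G, t) = ∑_B (-1)^|B| t^{|Bᶜ| + c_G(Bᶜ) - |V|}`.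

Duality matches the two expansions term by term. For `t = 2` the flows supported on `A` are the
even subsets of `A`, and duality maps these bijectively onto the cuts of `H` inside `φ A`; as `H`
is connected, these number `2^{c_H((φ A)ᶜ) - 1}`, each cut coming from exactly two vertex sets.
Hence `|A| + c_G(A) + 1 = c_H((φ A)ᶜ) + |V(G)|`.
-/

open Finset

theorem Polynomial.eq_of_eval_natCast_eq {R : Type*} [CommRing R] [IsDomain R] [CharZero R]
    {p q : R[X]} (h : ∀ n : ℕ, 0 < n → p.eval (n : R) = q.eval (n : R)) : p = q :=
  eq_of_infinite_eval_eq p q <| Set.infinite_of_injective_forall_mem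
    (f := fun n : ℕ => ((n + 1 : ℕ) : R)) (fun _ _ hab => by simpa using hab)
    fun n => h _ n.succ_pos

theorem natCard_eq_empty_eq_sum_neg_one_pow {X ι : Type*} [Finite X] [Fintype ι] [DecidableEq ι]
    (M : X → Finset ι) :
    (Nat.card {x // M x = ∅} : ℤ) =
      ∑ B : Finset ι, (-1) ^ #B * (Nat.card {x // B ⊆ M x} : ℤ) := by
  have := Fintype.ofFinite X
  classical
  simp only [Nat.card_eq_fintype_card, Fintype.card_subtype, card_filter, Nat.cast_sum,
    Nat.cast_ite, Nat.cast_one, Nat.cast_zero, mul_sum, mul_ite, mul_one, mul_zero]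
  rw [sum_comm]
  refine sum_congr rfl fun x _ => ?_
  rw [← sum_filter, filter_subset_univ, sum_powerset_neg_one_pow_card]

def finsetEquivZModTwo (α : Type*) [Fintype α] [DecidableEq α] :
    Finset α ≃ (α → ZMod 2) where
  toFun B a := if a ∈ B then 1 else 0
  invFun f := {a | f a = 1}
  left_inv B := by ext; simp
  right_inv f := funext fun a => by
    obtain h | h : f a = 0 ∨ f a = 1 := by generalize f a = x; decide +revert
    all_goals simp [h]

namespace Multigraph

section Components

variable (G : Multigraph)

def reachSetoid (A : Finset G.E) : Setoid G.V :=
  Relation.EqvGen.setoid fun x y => ∃ e ∈ A, G.src e = x ∧ G.tgt e = y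

variable {G}

theorem ReachOn.apply_eq {A : Finset G.E} {α : Sort*} {f : G.V → α}
    (hf : ∀ e ∈ A, f (G.src e) = f (G.tgt e)) {u v : G.V} (h : G.ReachOn A u v) :
    f u = f v := by
  induction h with
  | rel x y hxy => obtain ⟨e, he, rfl, rfl⟩ := hxy; exact hf e he
  | refl => rfl
  | symm _ _ _ ih => exact ih.symm
  | trans _ _ _ _ _ ih₁ ih₂ => exact ih₁.trans ih₂

def constOnEdgesEquiv (A : Finset G.E) (α : Type*) :
    {f : G.V → α // ∀ e ∈ A, f (G.src e) = f (G.tgt e)} ≃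
      (Quotient (G.reachSetoid A) → α) where
  toFun f := Quotient.lift f.1 fun _ _ => ReachOn.apply_eq f.2
  invFun g := ⟨fun v => g (Quotient.mk _ v), fun e he =>
    congr_arg g (Quotient.sound (.rel _ _ ⟨e, he, rfl, rfl⟩))⟩
  left_inv _ := rfl
  right_inv _ := funext fun q => Quotient.inductionOn q fun _ => rfl

theorem natCard_constOnEdges (A : Finset G.E) (α : Type*) :
    Nat.card {f : G.V → α // ∀ e ∈ A, f (G.src e) = f (G.tgt e)} =
      Nat.card α ^ G.numComponentsOn A := by
  rw [Nat.card_congr (constOnEdgesEquiv A α), Nat.card_fun]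
  rfl

variable (G) in
theorem properColorings_eq_sum (t : ℕ) :
    (G.properColorings t : ℤ) =
      ∑ B : Finset G.E, (-1) ^ #B * (t : ℤ) ^ G.numComponentsOn B := by
  have := natCard_eq_empty_eq_sum_neg_one_pow fun f : G.V → Fin t =>
    {e | f (G.src e) = f (G.tgt e)}
  simp only [filter_eq_empty_iff, subset_iff, mem_filter, mem_univ, true_and,
    natCard_constOnEdges, Nat.card_eq_fintype_card (α := Fin t), Fintype.card_fin] at this
  simpa [properColorings] using this

end Components

section Flows

variable (G : Multigraph) (R : Type*) [AddCommGroup R]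

def boundary : (G.E → R) →+ (G.V → R) where
  toFun f v := (∑ e, if G.src e = v then f e else 0) - ∑ e, if G.tgt e = v then f e else 0
  map_zero' := by ext; simp
  map_add' f g := by ext v; simp only [Pi.add_apply, ite_add_zero, sum_add_distrib]; abel

def flows : AddSubgroup (G.E → R) := (G.boundary R).ker

open scoped Classical in
noncomputable def componentSum : (G.V → R) →+ (Quotient (G.reachSetoid univ) → R) where
  toFun h q := ∑ v with Quotient.mk _ v = q, h v
  map_zero' := by ext; simp
  map_add' f g := by ext; simp [sum_add_distrib]

abbrev restrict (A : Finset G.E) : Multigraph where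
  V := G.V
  E := A
  src e := G.src e
  tgt e := G.tgt e

variable {G R}

theorem mem_flows_iff {f : G.E → R} : f ∈ G.flows R ↔
    ∀ v, (∑ e, if G.src e = v then f e else 0) = ∑ e, if G.tgt e = v then f e else 0 := by
  simp [flows, boundary, funext_iff, sub_eq_zero]

theorem boundary_single (e : G.E) (c : R) :
    G.boundary R (Pi.single e c) = Pi.single (G.src e) c - Pi.single (G.tgt e) c := by
  ext v
  simp only [boundary, AddMonoidHom.coe_mk, ZeroHom.coe_mk, Pi.sub_apply]
  rw [Fintype.sum_eq_single e fun x hx => by simp [hx],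
    Fintype.sum_eq_single e fun x hx => by simp [hx]]
  simp [Pi.single_apply, eq_comm]

theorem single_sub_single_mem_range_boundary {u w : G.V} (h : G.ReachOn univ u w) (c : R) :
    Pi.single u c - Pi.single w c ∈ (G.boundary R).range := by
  induction h with
  | rel x y hxy =>
    obtain ⟨e, -, rfl, rfl⟩ := hxy
    exact ⟨Pi.single e c, boundary_single e c⟩
  | refl => simp
  | symm _ _ _ ih => simpa using neg_mem ih
  | trans _ _ _ _ _ ih₁ ih₂ => simpa using add_mem ih₁ ih₂

open scoped Classical

theorem componentSum_single (v : G.V) (c : R) :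
    G.componentSum R (Pi.single v c) = Pi.single (Quotient.mk _ v) c := by
  ext q
  simp [componentSum, Pi.single_apply, eq_comm]

theorem componentSum_surjective : Function.Surjective (G.componentSum R) := fun k =>
  ⟨∑ q, Pi.single q.out (k q), by simp [componentSum_single, Finset.univ_sum_single]⟩

theorem sum_single_out_eq_zero {h : G.V → R} (hh : G.componentSum R h = 0) :
    ∑ v, (Pi.single (Quotient.mk (G.reachSetoid univ) v).out (h v) : G.V → R) = 0 := by
  calc ∑ v, (Pi.single (Quotient.mk (G.reachSetoid univ) v).out (h v) : G.V → R)
      = ∑ q, ∑ v with Quotient.mk _ v = q, Pi.single q.out (h v) :=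
        (sum_fiberwise _ _ _).symm.trans <| sum_congr rfl fun q _ =>
          sum_congr rfl fun v hv => by rw [(mem_filter.1 hv).2]
    _ = ∑ q, Pi.single q.out (G.componentSum R h q) := by
        simp_rw [← AddMonoidHom.single_apply, ← map_sum]; rfl
    _ = 0 := by simp [hh]

theorem range_boundary_eq_ker_componentSum :
    (G.boundary R).range = (G.componentSum R).ker := by
  refine le_antisymm ((AddMonoidHom.range_le_ker_iff _ _).2 ?_) fun h hh => ?_
  · refine AddMonoidHom.functions_ext _ _ _ fun e c => ?_
    have : Quotient.mk (G.reachSetoid univ) (G.src e) = Quotient.mk _ (G.tgt e) :=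
      Quotient.sound (.rel _ _ ⟨e, mem_univ e, rfl, rfl⟩)
    simp [boundary_single, componentSum_single, this]
  · have : h = ∑ v, (Pi.single v (h v) -
        (Pi.single (Quotient.mk (G.reachSetoid univ) v).out (h v) : G.V → R)) := by
      rw [sum_sub_distrib, sum_single_out_eq_zero hh, sub_zero, univ_sum_single]
    rw [this]
    exact AddSubgroup.sum_mem _ fun v _ =>
      single_sub_single_mem_range_boundary (Quotient.mk_out (s := G.reachSetoid univ) v).symm _

theorem natCard_flows_mul_pow [Finite R] :
    Nat.card (G.flows R) * Nat.card R ^ Fintype.card G.V =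
      Nat.card R ^ (Fintype.card G.E + G.numComponents) := by
  have card_domain : Nat.card (G.flows R) * Nat.card (G.boundary R).range =
      Nat.card R ^ Fintype.card G.E := by
    rw [flows, ← AddSubgroup.index_ker, AddSubgroup.card_mul_index, Nat.card_fun,
      Nat.card_eq_fintype_card (α := G.E)]
  have card_codomain : Nat.card (G.boundary R).range * Nat.card R ^ G.numComponents =
      Nat.card R ^ Fintype.card G.V := by
    have card_components : Nat.card R ^ G.numComponents = Nat.card (G.componentSum R).range := by
      rw [AddMonoidHom.range_eq_top.2 componentSum_surjective, AddSubgroup.card_top, Nat.card_fun]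
      rfl
    rw [range_boundary_eq_ker_componentSum, card_components, ← AddSubgroup.index_ker,
      AddSubgroup.card_mul_index, Nat.card_fun, Nat.card_eq_fintype_card (α := G.V)]
  rw [← card_codomain, ← mul_assoc, card_domain, pow_add]

theorem numComponents_restrict (A : Finset G.E) :
    (G.restrict A).numComponents = G.numComponentsOn A := by
  unfold numComponents numComponentsOn
  congr 3
  ext x y
  simp [and_left_comm]

theorem boundary_restrict {A : Finset G.E} {f : G.E → R} (hf : ∀ e ∉ A, f e = 0) :
    (G.restrict A).boundary R (fun e : A => f e) = G.boundary R f := by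
  have sum_restrict {F : G.E → R} (hF : ∀ e ∉ A, F e = 0) : ∑ e : A, F e = ∑ e, F e := by
    rw [sum_coe_sort A F, sum_subset (subset_univ A) fun e _ he => hF e he]
  ext v
  exact congr_arg₂ (· - ·)
    (sum_restrict (F := fun e => if G.src e = v then f e else 0) (by simp +contextual [hf]))
    (sum_restrict (F := fun e => if G.tgt e = v then f e else 0) (by simp +contextual [hf]))

def flowsSupportedEquiv (A : Finset G.E) :
    {f : G.flows R // ∀ e ∉ A, (f : G.E → R) e = 0} ≃ (G.restrict A).flows R where
  toFun f := ⟨fun e : A => f.1.1 e, by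
    rw [flows, AddMonoidHom.mem_ker, boundary_restrict f.2]; exact f.1.2⟩
  invFun g := ⟨⟨fun e => if h : e ∈ A then g.1 ⟨e, h⟩ else 0, by
    have hg : (G.restrict A).boundary R g = 0 := g.2
    rw [flows, AddMonoidHom.mem_ker, ← boundary_restrict fun e he => dif_neg he]
    simpa using hg⟩, fun e he => dif_neg he⟩
  left_inv f := by
    ext e
    by_cases he : e ∈ A
    · simp [he]
    · simp [he, f.2 e he]
  right_inv g := by ext e; simp

theorem natCard_flows_supported_mul_pow [Finite R] (A : Finset G.E) :
    Nat.card {f : G.flows R // ∀ e ∉ A, (f : G.E → R) e = 0} * Nat.card R ^ Fintype.card G.V =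
      Nat.card R ^ (#A + G.numComponentsOn A) := by
  rw [Nat.card_congr (flowsSupportedEquiv A), ← numComponents_restrict, ← Fintype.card_coe A]
  exact natCard_flows_mul_pow

theorem numFlows_eq_natCard (t : ℕ) :
    G.numFlows t = Nat.card {f : G.flows (ZMod t) // ∀ e, (f : G.E → ZMod t) e ≠ 0} := by
  refine Nat.card_congr <| (Equiv.subtypeEquivRight fun f => ?_).trans
    (Equiv.subtypeSubtypeEquivSubtypeInter (· ∈ G.flows (ZMod t)) fun f => ∀ e, f e ≠ 0).symm
  rw [IsNZFlow, mem_flows_iff, and_comm]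

variable (G) in
theorem numFlows_mul_pow_eq_sum {t : ℕ} (ht : 0 < t) :
    (G.numFlows t : ℤ) * t ^ Fintype.card G.V =
      ∑ B : Finset G.E, (-1) ^ #B * (t : ℤ) ^ (#Bᶜ + G.numComponentsOn Bᶜ) := by
  have : NeZero t := ⟨ht.ne'⟩
  have h := natCard_eq_empty_eq_sum_neg_one_pow fun f : G.flows (ZMod t) =>
    {e | (f : G.E → ZMod t) e = 0}
  simp only [filter_eq_empty_iff, subset_iff, mem_filter, mem_univ, true_and, true_implies] at h
  rw [numFlows_eq_natCard, h, sum_mul]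
  refine sum_congr rfl fun B _ => ?_
  have hB := natCard_flows_supported_mul_pow (R := ZMod t) Bᶜ
  simp only [mem_compl, not_not, Nat.card_zmod] at hB
  rw [mul_assoc]
  exact_mod_cast congr_arg (fun n : ℕ => (-1 : ℤ) ^ #B * n) hB

end Flows

section Duality

open scoped Classical

variable {G : Multigraph}

theorem isEvenEdgeSet_iff_indicator_mem_flows {B : Finset G.E} :
    G.IsEvenEdgeSet B ↔ finsetEquivZModTwo G.E B ∈ G.flows (ZMod 2) := by
  have hsum (F : G.E → G.V) (v : G.V) :
      (∑ e, if F e = v then finsetEquivZModTwo G.E B e else 0) = #{e ∈ B | F e = v} := by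
    simp only [finsetEquivZModTwo, Equiv.coe_fn_mk, ← ite_and, sum_boole]
    congr 2
    ext e
    simp [and_comm]
  simp only [IsEvenEdgeSet, mem_flows_iff, hsum]
  refine forall_congr' fun v => ?_
  rw [← ZMod.natCast_eq_zero_iff_even, Nat.cast_add, CharTwo.add_eq_zero]

theorem card_isEvenEdgeSet_subset_mul_pow (A : Finset G.E) :
    #{B : Finset G.E | B ⊆ A ∧ G.IsEvenEdgeSet B} * 2 ^ Fintype.card G.V =
      2 ^ (#A + G.numComponentsOn A) := by
  have toFlow : {B : Finset G.E // B ⊆ A ∧ G.IsEvenEdgeSet B} ≃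
      {f : G.flows (ZMod 2) // ∀ e ∉ A, (f : G.E → ZMod 2) e = 0} :=
    ((finsetEquivZModTwo G.E).subtypeEquiv fun B => by
      rw [isEvenEdgeSet_iff_indicator_mem_flows, and_comm]
      simp [finsetEquivZModTwo, subset_iff, not_imp_not]).trans
      (Equiv.subtypeSubtypeEquivSubtypeInter (· ∈ G.flows (ZMod 2))
        fun f => ∀ e ∉ A, f e = 0).symm
  rw [← Fintype.card_subtype, ← Nat.card_eq_fintype_card, Nat.card_congr toFlow]
  simpa using natCard_flows_supported_mul_pow (R := ZMod 2) A

theorem cutEdges_compl (S : Finset G.V) : G.cutEdges Sᶜ = G.cutEdges S := by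
  ext e
  simp only [cutEdges, mem_filter, mem_univ, true_and, mem_compl]
  tauto

theorem cutEdges_subset_iff {S : Finset G.V} {D : Finset G.E} :
    G.cutEdges S ⊆ D ↔ ∀ e ∈ Dᶜ, decide (G.src e ∈ S) = decide (G.tgt e ∈ S) := by
  simp only [cutEdges, subset_iff, mem_filter, mem_univ, true_and, mem_compl, decide_eq_decide]
  exact forall_congr' fun e => by tauto

theorem eq_or_eq_compl_of_cutEdges_eq (hG : G.Conn) {S T : Finset G.V}
    (h : G.cutEdges S = G.cutEdges T) : S = T ∨ S = Tᶜ := by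
  have hedge : ∀ e ∈ (univ : Finset G.E),
      (G.src e ∈ S ↔ G.src e ∈ T) = (G.tgt e ∈ S ↔ G.tgt e ∈ T) := fun e _ => by
    have he : e ∈ G.cutEdges S ↔ e ∈ G.cutEdges T := by rw [h]
    simp only [cutEdges, mem_filter, mem_univ, true_and] at he
    exact propext (by tauto)
  obtain ⟨v₀⟩ := hG.1
  have hconst (v : G.V) :=
    ReachOn.apply_eq (f := fun v => (v ∈ S ↔ v ∈ T)) hedge (hG.2 v₀ v)
  by_cases hv₀ : v₀ ∈ S ↔ v₀ ∈ T
  · exact .inl <| ext fun v => cast (hconst v) hv₀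
  · refine .inr <| ext fun v => ?_
    have := hconst v
    rw [mem_compl]
    by_contra hv
    exact hv₀ (cast this.symm (by tauto))

theorem card_cutEdges_subset (D : Finset G.E) :
    #{S : Finset G.V | G.cutEdges S ⊆ D} = 2 ^ G.numComponentsOn Dᶜ := by
  let toIndicator : {S : Finset G.V // G.cutEdges S ⊆ D} ≃
      {p : G.V → Bool // ∀ e ∈ Dᶜ, p (G.src e) = p (G.tgt e)} :=
    { toFun S := ⟨fun v => decide (v ∈ S.1), cutEdges_subset_iff.1 S.2⟩
      invFun p := ⟨({v | p.1 v} : Finset G.V), cutEdges_subset_iff.2 <| by simpa using p.2⟩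
      left_inv S := by ext; simp
      right_inv p := by ext; simp }
  rw [← Fintype.card_subtype, ← Nat.card_eq_fintype_card, Nat.card_congr toIndicator,
    natCard_constOnEdges, Nat.card_eq_fintype_card (α := Bool), Fintype.card_bool]

theorem card_image_cutEdges_mul_two (hG : G.Conn) (D : Finset G.E) :
    #(({S | G.cutEdges S ⊆ D} : Finset (Finset G.V)).image G.cutEdges) * 2 =
      2 ^ G.numComponentsOn Dᶜ := by
  have := hG.1
  set cuts : Finset (Finset G.V) := {S | G.cutEdges S ⊆ D}
  have hfiber : ∀ C ∈ cuts.image G.cutEdges, #{S ∈ cuts | G.cutEdges S = C} = 2 := by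
    simp only [mem_image]
    rintro _ ⟨S, hS, rfl⟩
    have : {T ∈ cuts | G.cutEdges T = G.cutEdges S} = {S, Sᶜ} := by
      ext T
      simp only [cuts, mem_filter, mem_univ, true_and, mem_insert, mem_singleton]
      constructor
      · exact fun h => eq_or_eq_compl_of_cutEdges_eq hG h.2
      · rintro (rfl | rfl) <;> simpa [cuts, cutEdges_compl] using hS
    rw [this, card_pair ne_compl_self]
  rw [← card_cutEdges_subset, card_eq_sum_card_image G.cutEdges cuts, sum_congr rfl hfiber,
    sum_const, smul_eq_mul]

theorem IsDual.card_isEvenEdgeSet_subset_eq_card_cuts {H : Multigraph} {φ : G.E ≃ H.E}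
    (hdual : G.IsDual H φ) (A : Finset G.E) :
    #{B : Finset G.E | B ⊆ A ∧ G.IsEvenEdgeSet B} =
      #(({S | H.cutEdges S ⊆ A.map φ.toEmbedding} : Finset (Finset H.V)).image H.cutEdges) := by
  rw [← card_map (Equiv.finsetCongr φ).toEmbedding]
  congr 1
  ext C
  simp only [mem_map_equiv, mem_filter, mem_univ, true_and, mem_image, Equiv.finsetCongr_symm,
    Equiv.finsetCongr_apply]
  have hC : (C.map φ.symm.toEmbedding).map φ.toEmbedding = C := by ext; simp
  rw [hdual, ← map_subset_map (f := φ.toEmbedding), hC]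
  constructor
  · rintro ⟨hCA, S, rfl⟩
    exact ⟨S, hCA, rfl⟩
  · rintro ⟨S, hSA, rfl⟩
    exact ⟨hSA, S, rfl⟩

theorem IsDual.card_add_numComponentsOn_add_one {H : Multigraph} {φ : G.E ≃ H.E}
    (hdual : G.IsDual H φ) (hH : H.Conn) (A : Finset G.E) :
    #A + G.numComponentsOn A + 1 =
      H.numComponentsOn (A.map φ.toEmbedding)ᶜ + Fintype.card G.V := by
  apply Nat.pow_right_injective le_rfl
  dsimp only
  rw [pow_succ, ← card_isEvenEdgeSet_subset_mul_pow, hdual.card_isEvenEdgeSet_subset_eq_card_cuts,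
    pow_add, ← card_image_cutEdges_mul_two hH]
  ring

theorem IsDual.mul_numFlows_eq_properColorings {H : Multigraph} {φ : G.E ≃ H.E}
    (hdual : G.IsDual H φ) (hH : H.Conn) {t : ℕ} (ht : 0 < t) :
    t * G.numFlows t = H.properColorings t := by
  have hpow : (t : ℤ) ^ Fintype.card G.V ≠ 0 := pow_ne_zero _ (by exact_mod_cast ht.ne')
  suffices (t * G.numFlows t : ℤ) * t ^ Fintype.card G.V =
      H.properColorings t * t ^ Fintype.card G.V by
    exact_mod_cast mul_right_cancel₀ hpow this
  calc (t * G.numFlows t : ℤ) * t ^ Fintype.card G.V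
      = ∑ B : Finset G.E, (-1) ^ #B *
          (t : ℤ) ^ (H.numComponentsOn (B.map φ.toEmbedding) + Fintype.card G.V) := by
        rw [mul_assoc, numFlows_mul_pow_eq_sum G ht, mul_sum]
        refine sum_congr rfl fun B _ => ?_
        have hB : (Bᶜ.map φ.toEmbedding)ᶜ = B.map φ.toEmbedding := by ext; simp
        rw [← hB, ← hdual.card_add_numComponentsOn_add_one hH, pow_succ]
        ring
    _ = ∑ B : Finset H.E, (-1) ^ #B * (t : ℤ) ^ (H.numComponentsOn B + Fintype.card G.V) :=
        Fintype.sum_equiv (Equiv.finsetCongr φ) _ _ fun B => by simp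
    _ = H.properColorings t * t ^ Fintype.card G.V := by
        rw [properColorings_eq_sum, sum_mul]
        simp only [pow_add, mul_assoc]

end Duality

end Multigraph

theorem flow_chromatic_duality_general (G Gstar : Multigraph) (φ : G.E ≃ Gstar.E)
    (hGstar : Gstar.Conn) (hdual : G.IsDual Gstar φ)
    (F P : Polynomial ℝ) (hF : G.IsFlowPoly F)
    (hP : Gstar.IsChromaticPoly P) :
    X * F = P ∧ ∀ t : ℕ, 0 < t →
      t * G.numFlows t = Gstar.properColorings t := by
  have hcount (t : ℕ) (ht : 0 < t) := hdual.mul_numFlows_eq_properColorings hGstar ht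
  refine ⟨Polynomial.eq_of_eval_natCast_eq fun t ht => ?_, hcount⟩
  rw [eval_mul, eval_X, hF t ht, hP t ht, ← hcount t ht, Nat.cast_mul]

/-- For a connected plane graph `G` with planar dual `G*`, `t·F(G,t) = P(G*,t)`:
as polynomials, and for every positive integer `t` the number of proper
`t`-colourings of `G*` is `t` times the number of nowhere-zero `ZMod t`-flows
of `G`. -/
theorem flow_chromatic_duality (G Gstar : Multigraph) (φ : G.E ≃ Gstar.E)
    (hG : G.Conn) (hGstar : Gstar.Conn) (hdual : G.IsDual Gstar φ)
    (F P : Polynomial ℝ) (hF : G.IsFlowPoly F)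
    (hP : Gstar.IsChromaticPoly P) :
    X * F = P ∧ ∀ t : ℕ, 0 < t →
      t * G.numFlows t = Gstar.properColorings t :=
  flow_chromatic_duality_general G Gstar φ hGstar hdual F P hF hP
end
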